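/- arXiv:0801.1855 — 9 statements merged into one kernel-verified Lean document; each statement's English description precedes it below -/
import Mathlib

section
/- Let h : [0,∞) → [0,∞) be continuous, increasing, with h(0)=0, and define h̃(r) = r^d · inf_{0<t≤r} h(t)/t^d. Then for every set G ⊆ ℝ^d one has M_{h̃}(G) ≤ M_h(G) ≤ C_d · M_{h̃}(G), where M_g denotes the Hausdorff content with gauge g (infimum of Σ g(r_j) over countable coverings of G by balls of radii r_j) and C_d depends only on d. -/
/-!
Since `h̃ ≤ h`, the first inequality is immediate. For the second, replace each ball `B(x, r)`
of a cover by at most `5^d (r/t)^d` balls of radius `t`, where `t ∈ (0, r]` almost attains the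
infimum defining `h̃(r)`: their cost `5^d (r/t)^d h(t) = 5^d r^d h(t)/t^d` is then at most
`5^d h̃(r) + ε`. The count `5^d (r/t)^d` comes from comparing volumes: the balls of radius `t/4`
around a maximal `t/2`-separated subset of `B(x, r)` are disjoint and lie in `B(x, r + t/4)`.
-/

open MeasureTheory Set

/-- Hausdorff content with gauge `g`: infimum of `∑ g(r_j)` over countable
coverings of `G` by balls of radii `r_j`. -/
noncomputable def hContent (d : ℕ) (g : ℝ → ℝ) (G : Set (EuclideanSpace ℝ (Fin d))) : ENNReal :=
  ⨅ (c : ℕ → EuclideanSpace ℝ (Fin d)) (r : ℕ → ℝ)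
    (_ : G ⊆ ⋃ n, Metric.ball (c n) (r n)), ∑' n, ENNReal.ofReal (g (r n))

/-- `h̃(r) = r^d · inf_{0 < t ≤ r} h(t)/t^d`. -/
noncomputable def htilde (d : ℕ) (h : ℝ → ℝ) (r : ℝ) : ℝ :=
  r ^ d * sInf {v : ℝ | ∃ t : ℝ, 0 < t ∧ t ≤ r ∧ v = h t / t ^ d}

open Metric Module
open scoped NNReal ENNReal

section Covering

variable {E : Type*} [NormedAddCommGroup E] [NormedSpace ℝ E] [FiniteDimensional ℝ E]

theorem Finset.card_le_of_isSeparated_of_subset_ball [MeasurableSpace E] [BorelSpace E]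
    {s : Finset E} {x : E} {r : ℝ} {δ : ℝ≥0} (hr : 0 ≤ r) (hδ : 0 < δ)
    (hs : (s : Set E) ⊆ ball x r) (hsep : IsSeparated δ (s : Set E)) :
    (s.card : ℝ) ≤ (2 * r / δ + 1) ^ finrank ℝ E := by
  set μ : Measure E := Measure.addHaar
  have hδ2 : (0 : ℝ) < δ / 2 := by positivity
  have hrδ : 0 < r + δ / 2 := by positivity
  have hdisj : (s : Set E).PairwiseDisjoint fun y ↦ ball y (δ / 2) := by
    intro y hy z hz hyz
    refine ball_disjoint_ball ?_
    have : (δ : ℝ≥0∞) < edist y z := hsep hy hz hyz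
    rw [edist_dist, ← ENNReal.ofReal_coe_nnreal,
      ENNReal.ofReal_lt_ofReal_iff_of_nonneg δ.coe_nonneg] at this
    linarith
  have hsub : (⋃ y ∈ s, ball y (δ / 2)) ⊆ ball x (r + δ / 2) :=
    iUnion₂_subset fun y hy ↦ ball_subset_ball' (by linarith [mem_ball.1 (hs hy)])
  have hunit : 0 < μ (ball 0 1) := measure_ball_pos μ 0 one_pos
  have hunit' : μ (ball 0 1) ≠ ∞ := measure_ball_lt_top.ne
  have key : (s.card : ℝ≥0∞) * ENNReal.ofReal ((δ / 2 : ℝ) ^ finrank ℝ E) * μ (ball 0 1) ≤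
      ENNReal.ofReal ((r + δ / 2) ^ finrank ℝ E) * μ (ball 0 1) := by
    calc (s.card : ℝ≥0∞) * ENNReal.ofReal ((δ / 2 : ℝ) ^ finrank ℝ E) * μ (ball 0 1)
        = μ (⋃ y ∈ s, ball y (δ / 2)) := by
          rw [measure_biUnion_finset hdisj fun _ _ ↦ measurableSet_ball]
          simp [μ.addHaar_ball_of_pos _ hδ2, mul_assoc]
      _ ≤ μ (ball x (r + δ / 2)) := measure_mono hsub
      _ = _ := μ.addHaar_ball_of_pos _ hrδ
  rw [ENNReal.mul_le_mul_iff_left hunit.ne' hunit', ← ENNReal.ofReal_natCast,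
    ← ENNReal.ofReal_mul (by positivity), ENNReal.ofReal_le_ofReal_iff (by positivity),
    ← le_div_iff₀ (by positivity), ← div_pow] at key
  rwa [show 2 * r / δ + 1 = (r + δ / 2) / (δ / 2 : ℝ) by field_simp]

theorem Metric.IsSeparated.encard_le_of_subset_ball {C : Set E} {x : E} {r : ℝ} {δ : ℝ≥0}
    (hr : 0 ≤ r) (hδ : 0 < δ) (hC : C ⊆ ball x r) (hsep : IsSeparated δ C) :
    C.encard ≤ ⌊(2 * r / δ + 1) ^ finrank ℝ E⌋₊ := by
  borelize E
  set N := ⌊(2 * r / δ + 1) ^ finrank ℝ E⌋₊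
  have hcard : ∀ s : Finset E, ↑s ⊆ C → s.card ≤ N := fun s hs ↦
    Nat.le_floor <| Finset.card_le_of_isSeparated_of_subset_ball hr hδ (hs.trans hC) (hsep.mono hs)
  have hfin : C.Finite := by
    by_contra hinf
    obtain ⟨s, hs, hsN⟩ := Set.Infinite.exists_subset_card_eq hinf (N + 1)
    have := hcard s hs
    omega
  rw [← hfin.coe_toFinset, Set.encard_coe_eq_coe_finsetCard]
  exact_mod_cast hcard _ (by simp)

theorem exists_finset_card_le_and_ball_subset_iUnion_ball (x : E) {r t : ℝ} (ht : 0 < t)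
    (htr : t ≤ r) : ∃ s : Finset E, ball x r ⊆ ⋃ y ∈ s, ball y t ∧
      (s.card : ℝ) ≤ 5 ^ finrank ℝ E * (r / t) ^ finrank ℝ E := by
  set δ : ℝ≥0 := (t / 2).toNNReal
  have hδt : (δ : ℝ) = t / 2 := Real.coe_toNNReal _ (by positivity)
  have hδ : 0 < δ := by rw [← NNReal.coe_pos, hδt]; positivity
  have hr : 0 ≤ r := ht.le.trans htr
  set N := ⌊(2 * r / δ + 1) ^ finrank ℝ E⌋₊
  have hpack : packingNumber δ (ball x r) ≤ N :=
    iSup_le fun C ↦ iSup_le fun hC ↦ iSup_le fun hsep ↦ hsep.encard_le_of_subset_ball hr hδ hC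
  have hpack' : packingNumber δ (ball x r) ≠ ⊤ := ne_top_of_le_ne_top (by simp) hpack
  set M := maximalSeparatedSet δ (ball x r)
  have hM : M.encard ≤ N := (encard_maximalSeparatedSet hpack').trans_le hpack
  have hMfin : M.Finite := Set.finite_of_encard_le_coe hM
  refine ⟨hMfin.toFinset, ?_, ?_⟩
  · have := isCover_iff_subset_iUnion_closedBall.1 (isCover_maximalSeparatedSet hpack')
    simp only [Set.Finite.mem_toFinset]
    exact this.trans <| iUnion₂_mono fun y _ ↦ closedBall_subset_ball (by linarith)
  · rw [← hMfin.coe_toFinset, Set.encard_coe_eq_coe_finsetCard] at hM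
    calc (hMfin.toFinset.card : ℝ) ≤ N := by exact_mod_cast hM
      _ ≤ (2 * r / δ + 1) ^ finrank ℝ E := Nat.floor_le (by positivity)
      _ ≤ (5 * (r / t)) ^ finrank ℝ E := by
          gcongr
          have : 1 ≤ r / t := (one_le_div ht).2 htr
          rw [hδt, show 2 * r / (t / 2) = 4 * (r / t) by field_simp; ring]
          linarith
      _ = _ := mul_pow _ _ _

end Covering

section hContent

variable {d : ℕ} {g g' : ℝ → ℝ} {G : Set (EuclideanSpace ℝ (Fin d))}

theorem hContent_mono_gauge (hgg' : ∀ r, ENNReal.ofReal (g r) ≤ ENNReal.ofReal (g' r)) :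
    hContent d g G ≤ hContent d g' G :=
  iInf_mono fun _ ↦ iInf_mono fun r ↦ iInf_mono fun _ ↦ ENNReal.tsum_le_tsum fun n ↦ hgg' (r n)

theorem hContent_le_tsum {ι : Type*} [Countable ι] (hg : g 0 = 0)
    (c : ι → EuclideanSpace ℝ (Fin d)) (r : ι → ℝ) (hG : G ⊆ ⋃ i, ball (c i) (r i)) :
    hContent d g G ≤ ∑' i, ENNReal.ofReal (g (r i)) := by
  obtain ⟨e, he⟩ := Countable.exists_injective_nat ι
  -- Indices outside the range of `e` get radius `0`, hence empty balls of zero cost.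
  have hcover : G ⊆ ⋃ n, ball (Function.extend e c 0 n) (Function.extend e r 0 n) := by
    refine hG.trans <| iUnion_subset fun i ↦ ?_
    rw [← he.extend_apply c 0 i, ← he.extend_apply r 0 i]
    exact subset_iUnion (fun n ↦ ball (Function.extend e c 0 n) (Function.extend e r 0 n)) (e i)
  calc hContent d g G ≤ ∑' n, ENNReal.ofReal (g (Function.extend e r 0 n)) :=
        iInf_le_of_le _ <| iInf_le_of_le _ <| iInf_le _ hcover
    _ = ∑' n, Function.extend e (fun i ↦ ENNReal.ofReal (g (r i))) 0 n := by
        refine tsum_congr fun n ↦ ?_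
        rw [Function.apply_extend (fun s ↦ ENNReal.ofReal (g s))]
        simp only [Function.comp_def, Pi.zero_apply, hg, ENNReal.ofReal_zero]
        rfl
    _ = ∑' i, ENNReal.ofReal (g (r i)) := tsum_extend_zero he _

theorem hContent_le_mul_of_forall_ball {C : ℝ} (hC : 0 < C) (hg : g 0 = 0)
    (hball : ∀ (x : EuclideanSpace ℝ (Fin d)) (r : ℝ) (ε : ℝ≥0), 0 < ε →
      ∃ (t : ℝ) (s : Finset (EuclideanSpace ℝ (Fin d))), ball x r ⊆ ⋃ y ∈ s, ball y t ∧
        s.card * ENNReal.ofReal (g t) ≤ ENNReal.ofReal C * ENNReal.ofReal (g' r) + ε) :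
    hContent d g G ≤ ENNReal.ofReal C * hContent d g' G := by
  have hC0 : ENNReal.ofReal C ≠ 0 := (ENNReal.ofReal_pos.2 hC).ne'
  simp only [hContent, ENNReal.mul_iInf_of_ne hC0 ENNReal.ofReal_ne_top]
  refine le_iInf fun c ↦ le_iInf fun r ↦ le_iInf fun hG ↦ ?_
  refine ENNReal.le_of_forall_pos_le_add fun δ hδ _ ↦ ?_
  obtain ⟨ε, hε, hεδ⟩ := ENNReal.exists_pos_sum_of_countable (ENNReal.coe_ne_zero.2 hδ.ne') ℕ
  choose t s hsub hcost using fun n ↦ hball (c n) (r n) (ε n) (hε n)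
  have hcover : G ⊆ ⋃ p : Σ n, s n, ball (p.2 : EuclideanSpace ℝ (Fin d)) (t p.1) := by
    refine hG.trans <| iUnion_subset fun n ↦ (hsub n).trans <| iUnion₂_subset fun y hy ↦ ?_
    exact subset_iUnion (fun p : Σ n, s n ↦ ball (p.2 : EuclideanSpace ℝ (Fin d)) (t p.1))
      ⟨n, y, hy⟩
  calc _ ≤ ∑' p : Σ n, s n, ENNReal.ofReal (g (t p.1)) := hContent_le_tsum hg _ _ hcover
    _ = ∑' n, (s n).card * ENNReal.ofReal (g (t n)) := by
        rw [ENNReal.tsum_sigma']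
        simp
    _ ≤ ∑' n, (ENNReal.ofReal C * ENNReal.ofReal (g' (r n)) + ε n) := ENNReal.tsum_le_tsum hcost
    _ ≤ ENNReal.ofReal C * ∑' n, ENNReal.ofReal (g' (r n)) + δ := by
        rw [ENNReal.tsum_add, ENNReal.tsum_mul_left]
        exact add_le_add_right hεδ.le _

end hContent

section htilde

variable {d : ℕ} {h : ℝ → ℝ}

theorem bddBelow_htilde_set (hh : ∀ t, 0 < t → 0 ≤ h t) (r : ℝ) :
    BddBelow {v : ℝ | ∃ t : ℝ, 0 < t ∧ t ≤ r ∧ v = h t / t ^ d} := by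
  refine ⟨0, ?_⟩
  rintro _ ⟨t, ht, -, rfl⟩
  exact div_nonneg (hh t ht) (pow_nonneg ht.le d)

theorem htilde_le (hh : ∀ t, 0 < t → 0 ≤ h t) {r : ℝ} (hr : 0 < r) : htilde d h r ≤ h r :=
  calc htilde d h r ≤ r ^ d * (h r / r ^ d) :=
        mul_le_mul_of_nonneg_left (csInf_le (bddBelow_htilde_set hh r) ⟨r, hr, le_rfl, rfl⟩)
          (pow_nonneg hr.le d)
    _ = h r := by field_simp

theorem htilde_of_nonpos {r : ℝ} (hr : r ≤ 0) : htilde d h r = 0 := by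
  have : {v : ℝ | ∃ t : ℝ, 0 < t ∧ t ≤ r ∧ v = h t / t ^ d} = ∅ :=
    eq_empty_of_forall_notMem fun _ ⟨t, ht, htr, _⟩ ↦ by linarith
  rw [htilde, this, Real.sInf_empty, mul_zero]

theorem ofReal_htilde_le (hh : ∀ t, 0 < t → 0 ≤ h t) (r : ℝ) :
    ENNReal.ofReal (htilde d h r) ≤ ENNReal.ofReal (h r) := by
  rcases le_or_gt r 0 with hr | hr
  · simp [htilde_of_nonpos hr]
  · exact ENNReal.ofReal_le_ofReal (htilde_le hh hr)

theorem exists_pow_mul_div_pow_lt_htilde_add (hh : ∀ t, 0 < t → 0 ≤ h t) {r η : ℝ} (hr : 0 < r)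
    (hη : 0 < η) : ∃ t, 0 < t ∧ t ≤ r ∧ r ^ d * (h t / t ^ d) < htilde d h r + η := by
  have hrd : 0 < r ^ d := pow_pos hr d
  obtain ⟨_, ⟨t, ht, htr, rfl⟩, hlt⟩ := (csInf_lt_iff (bddBelow_htilde_set hh r)
    ⟨_, r, hr, le_rfl, rfl⟩).1 (lt_add_of_pos_right _ (div_pos hη hrd))
  refine ⟨t, ht, htr, ?_⟩
  calc r ^ d * (h t / t ^ d) < r ^ d * (sInf _ + η / r ^ d) := mul_lt_mul_of_pos_left hlt hrd
    _ = htilde d h r + η := by rw [htilde, mul_add, mul_div_cancel₀ _ hrd.ne']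

theorem exists_finset_cover_card_mul_le_htilde (hh : ∀ t, 0 < t → 0 ≤ h t)
    (x : EuclideanSpace ℝ (Fin d)) (r : ℝ) (ε : ℝ≥0) (hε : 0 < ε) :
    ∃ (t : ℝ) (s : Finset (EuclideanSpace ℝ (Fin d))), ball x r ⊆ ⋃ y ∈ s, ball y t ∧
      s.card * ENNReal.ofReal (h t) ≤
        ENNReal.ofReal (5 ^ d) * ENNReal.ofReal (htilde d h r) + ε := by
  rcases le_or_gt r 0 with hr | hr
  · exact ⟨0, ∅, by simp [ball_eq_empty.2 hr], by simp⟩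
  have h5 : (0 : ℝ) < 5 ^ d := by positivity
  obtain ⟨t, ht, htr, hlt⟩ :=
    exists_pow_mul_div_pow_lt_htilde_add hh hr (div_pos (NNReal.coe_pos.2 hε) h5)
  obtain ⟨s, hsub, hcard⟩ := exists_finset_card_le_and_ball_subset_iUnion_ball x ht htr
  rw [finrank_euclideanSpace_fin] at hcard
  refine ⟨t, s, hsub, ?_⟩
  have key : s.card * h t ≤ 5 ^ d * htilde d h r + ε :=
    calc s.card * h t ≤ 5 ^ d * (r / t) ^ d * h t := mul_le_mul_of_nonneg_right hcard (hh t ht)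
      _ = 5 ^ d * (r ^ d * (h t / t ^ d)) := by rw [div_pow]; ring
      _ ≤ 5 ^ d * (htilde d h r + ε / 5 ^ d) := by gcongr
      _ = 5 ^ d * htilde d h r + ε := by rw [mul_add, mul_div_cancel₀ _ h5.ne']
  calc s.card * ENNReal.ofReal (h t) = ENNReal.ofReal (s.card * h t) := by
        rw [ENNReal.ofReal_mul (Nat.cast_nonneg _), ENNReal.ofReal_natCast]
    _ ≤ ENNReal.ofReal (5 ^ d * htilde d h r + ε) := ENNReal.ofReal_le_ofReal key
    _ ≤ ENNReal.ofReal (5 ^ d) * ENNReal.ofReal (htilde d h r) + ε := by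
        grw [ENNReal.ofReal_add_le, ENNReal.ofReal_mul h5.le, ENNReal.ofReal_coe_nnreal]

end htilde

theorem stmt0_general (d : ℕ) :
    ∃ C : ℝ, 0 < C ∧ ∀ h : ℝ → ℝ,
      ContinuousOn h (Set.Ici 0) → MonotoneOn h (Set.Ici 0) → h 0 = 0 →
      ∀ G : Set (EuclideanSpace ℝ (Fin d)),
        hContent d (htilde d h) G ≤ hContent d h G ∧
        hContent d h G ≤ ENNReal.ofReal C * hContent d (htilde d h) G := by
  refine ⟨5 ^ d, by positivity, fun h _ hmono h0 G ↦ ?_⟩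
  have hh : ∀ t, 0 < t → 0 ≤ h t := fun t ht ↦ h0 ▸ hmono self_mem_Ici (mem_Ici.2 ht.le) ht.le
  exact ⟨hContent_mono_gauge (ofReal_htilde_le hh),
    hContent_le_mul_of_forall_ball (by positivity) h0 (exists_finset_cover_card_mul_le_htilde hh)⟩

/-- For any continuous increasing `h` with `h(0) = 0`, the Hausdorff contents with
gauges `h` and `h̃` are comparable: `M_{h̃}(G) ≤ M_h(G) ≤ C_d · M_{h̃}(G)`. -/
theorem stmt0 (d : ℕ) (hd : 0 < d) :
    ∃ C : ℝ, 0 < C ∧ ∀ h : ℝ → ℝ,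
      ContinuousOn h (Set.Ici 0) → MonotoneOn h (Set.Ici 0) → h 0 = 0 →
      ∀ G : Set (EuclideanSpace ℝ (Fin d)),
        hContent d (htilde d h) G ≤ hContent d h G ∧
        hContent d h G ≤ ENNReal.ofReal C * hContent d (htilde d h) G :=
  stmt0_general d
end

section
/- Let x, y, z be three distinct points in ℝ^d with |z−x| ≤ |z−y| ≤ |y−x|, and let s > 0. Then the symmetrized quantity q_s(x,y,z) = ⟨(x−z)/|x−z|^{s+1}, (y−z)/|y−z|^{s+1}⟩ + ⟨(y−x)/|y−x|^{s+1}, (z−x)/|z−x|^{s+1}⟩ satisfies q_s(x,y,z) ≤ 2^{s+1} / (|y−x|^{s+1} · |z−x|^{s−1}). -/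
/-!
With `a = ‖y - x‖`, `b = ‖z - y‖`, `c = ‖z - x‖`, the law of cosines turns `q_s` into
`(b² + c² - a²) / (2 b^(s+1) c^(s+1)) + (a² + c² - b²) / (2 a^(s+1) c^(s+1))`.
Clearing denominators, the claim becomes
`a^(s+1) (b² + c² - a²) + b^(s+1) (a² + c² - b²) ≤ 2 · 2^(s+1) b^(s+1) c²`.
Since `b ≤ a`, the cross term `(a^(s+1) - b^(s+1)) (b² - a²)` is nonpositive, and what remains,
`(a^(s+1) + b^(s+1)) c²`, is controlled by `a ≤ b + c ≤ 2b`.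
-/

open RealInnerProductSpace

theorem inner_inv_rpow_smul_inv_rpow_smul {E : Type*} [NormedAddCommGroup E]
    [InnerProductSpace ℝ E] (p : ℝ) (u v : E) :
    ⟪(‖u‖ ^ p)⁻¹ • u, (‖v‖ ^ p)⁻¹ • v⟫ =
      (‖u‖ ^ 2 + ‖v‖ ^ 2 - ‖u - v‖ ^ 2) / (2 * (‖u‖ ^ p * ‖v‖ ^ p)) := by
  rw [real_inner_smul_left, real_inner_smul_right, norm_sub_sq_real, div_eq_mul_inv, mul_inv,
    mul_inv]
  ring

theorem rpow_mul_add_rpow_mul_le {a b c p : ℝ} (hp : 0 ≤ p) (hb : 0 ≤ b) (hba : b ≤ a)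
    (hab : a ≤ 2 * b) :
    a ^ p * (b ^ 2 + c ^ 2 - a ^ 2) + b ^ p * (a ^ 2 + c ^ 2 - b ^ 2) ≤
      2 * 2 ^ p * b ^ p * c ^ 2 := by
  have hbpa : b ^ p ≤ a ^ p := Real.rpow_le_rpow hb hba hp
  have hap : a ^ p ≤ 2 ^ p * b ^ p := by
    rw [← Real.mul_rpow zero_le_two hb]
    exact Real.rpow_le_rpow (hb.trans hba) hab hp
  have hbp : b ^ p ≤ 2 ^ p * b ^ p :=
    le_mul_of_one_le_left (Real.rpow_nonneg hb p) (Real.one_le_rpow one_le_two hp)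
  have cross : (a ^ p - b ^ p) * (b ^ 2 - a ^ 2) ≤ 0 :=
    mul_nonpos_of_nonneg_of_nonpos (sub_nonneg.2 hbpa) (by nlinarith)
  calc a ^ p * (b ^ 2 + c ^ 2 - a ^ 2) + b ^ p * (a ^ 2 + c ^ 2 - b ^ 2)
      = (a ^ p + b ^ p) * c ^ 2 + (a ^ p - b ^ p) * (b ^ 2 - a ^ 2) := by ring
    _ ≤ (2 ^ p * b ^ p + 2 ^ p * b ^ p) * c ^ 2 + 0 := by gcongr
    _ = 2 * 2 ^ p * b ^ p * c ^ 2 := by ring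

theorem div_add_div_le_of_triangle_sides {a b c s : ℝ} (hs : -1 ≤ s) (hc : 0 < c) (hcb : c ≤ b)
    (hba : b ≤ a) (hab : a ≤ 2 * b) :
    (c ^ 2 + b ^ 2 - a ^ 2) / (2 * (c ^ (s + 1) * b ^ (s + 1))) +
        (a ^ 2 + c ^ 2 - b ^ 2) / (2 * (a ^ (s + 1) * c ^ (s + 1))) ≤
      2 ^ (s + 1) / (a ^ (s + 1) * c ^ (s - 1)) := by
  have hb : 0 < b := hc.trans_le hcb
  have ha : 0 < a := hb.trans_le hba
  have hc_pow : c ^ (s + 1) = c ^ (s - 1) * c ^ 2 := by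
    rw [← Real.rpow_natCast, ← Real.rpow_add hc]
    ring_nf
  rw [hc_pow, div_add_div _ _ (by positivity) (by positivity), div_le_div_iff₀ (by positivity)
    (by positivity)]
  have key := rpow_mul_add_rpow_mul_le (c := c) (by linarith : 0 ≤ s + 1) hb.le hba hab
  have hM : 0 ≤ 2 * c ^ (s - 1) * c ^ 2 * (a ^ (s + 1) * c ^ (s - 1)) := by positivity
  linear_combination mul_le_mul_of_nonneg_left key hM

theorem stmt1_general {d : ℕ} (s : ℝ) (hs : 0 < s) (x y z : EuclideanSpace ℝ (Fin d))
    (hxz : x ≠ z)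
    (h1 : ‖z - x‖ ≤ ‖z - y‖) (h2 : ‖z - y‖ ≤ ‖y - x‖) :
    (inner ℝ ((‖x - z‖ ^ (s + 1))⁻¹ • (x - z)) ((‖y - z‖ ^ (s + 1))⁻¹ • (y - z)) : ℝ) +
      (inner ℝ ((‖y - x‖ ^ (s + 1))⁻¹ • (y - x)) ((‖z - x‖ ^ (s + 1))⁻¹ • (z - x)) : ℝ) ≤
      2 ^ (s + 1) / (‖y - x‖ ^ (s + 1) * ‖z - x‖ ^ (s - 1)) := by
  have h3 : ‖y - x‖ ≤ 2 * ‖z - y‖ := by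
    linarith [norm_sub_le_norm_sub_add_norm_sub y z x, norm_sub_rev y z]
  rw [inner_inv_rpow_smul_inv_rpow_smul, inner_inv_rpow_smul_inv_rpow_smul,
    sub_sub_sub_cancel_right, sub_sub_sub_cancel_right, norm_sub_rev x z, norm_sub_rev y z,
    norm_sub_rev x y]
  exact div_add_div_le_of_triangle_sides (by linarith) (norm_sub_pos_iff.2 hxz.symm) h1 h2 h3

/-- Symmetrization inequality for the vector-valued Riesz kernel: if
`|z−x| ≤ |z−y| ≤ |y−x|` and `s > 0`, then
`q_s(x,y,z) ≤ 2^(s+1) / (|y−x|^(s+1) · |z−x|^(s−1))`. -/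
theorem stmt1 {d : ℕ} (s : ℝ) (hs : 0 < s) (x y z : EuclideanSpace ℝ (Fin d))
    (hxz : x ≠ z) (hyz : y ≠ z) (hxy : x ≠ y)
    (h1 : ‖z - x‖ ≤ ‖z - y‖) (h2 : ‖z - y‖ ≤ ‖y - x‖) :
    (inner ℝ ((‖x - z‖ ^ (s + 1))⁻¹ • (x - z)) ((‖y - z‖ ^ (s + 1))⁻¹ • (y - z)) : ℝ) +
      (inner ℝ ((‖y - x‖ ^ (s + 1))⁻¹ • (y - x)) ((‖z - x‖ ^ (s + 1))⁻¹ • (z - x)) : ℝ) ≤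
      2 ^ (s + 1) / (‖y - x‖ ^ (s + 1) * ‖z - x‖ ^ (s - 1)) :=
  stmt1_general s hs x y z hxz h1 h2
end

section
/- Let η be a finite measure on a set X, let f be a measurable function, and let τ, K ∈ (0,∞) be such that for every measurable set F one has ∫_F |f|² dη ≤ τ + K·η(F). Then f can be written as f = f₁ + f₂ where ‖f₂‖_∞ ≤ 2K^{1/2} and ∫ |f₁|² dη ≤ (4/3)τ. -/
/-!
Cut `f` at height `2√K`: let `f₁` be `f` on `F = {2√K < |f|}` and `f₂` the rest. On `F` we have
`f² ≥ 4K`, so `4K·η(F) ≤ ∫_F f²`; feeding this into the hypothesis for `F` gives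
`∫_F f² ≤ τ + (1/4) ∫_F f²`.
-/

open MeasureTheory

theorem setIntegral_mul_sub_one_le_of_le_add_measure {X : Type*} [MeasurableSpace X]
    {η : Measure X} {g : X → ℝ} {F : Set X} {τ K c : ℝ} (hF : MeasurableSet F) (hηF : η F ≠ ⊤)
    (hτ : 0 ≤ τ) (hc : 0 ≤ c) (hlow : ∀ x ∈ F, c * K ≤ g x)
    (hup : ∫ x in F, g x ∂η ≤ τ + K * η.real F) :
    (c - 1) * ∫ x in F, g x ∂η ≤ c * τ := by
  by_cases hint : IntegrableOn g F η
  · have hge : c * K * η.real F ≤ ∫ x in F, g x ∂η :=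
      setIntegral_ge_of_const_le_real hF hηF hlow hint
    nlinarith
  · rw [integral_undef hint]
    simpa using mul_nonneg hc hτ

theorem four_mul_le_sq_of_two_mul_sqrt_lt_abs {K y : ℝ} (h : 2 * Real.sqrt K < |y|) :
    4 * K ≤ y ^ 2 := by
  have := Real.lt_sq_of_sqrt_lt (x := K) (y := |y| / 2) (by linarith)
  nlinarith [sq_abs y]

theorem integral_sq_indicator {X : Type*} [MeasurableSpace X] {η : Measure X} {F : Set X}
    (hF : MeasurableSet F) (f : X → ℝ) :
    ∫ x, (F.indicator f x) ^ 2 ∂η = ∫ x in F, f x ^ 2 ∂η := by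
  rw [← integral_indicator hF]
  congr 1 with x
  by_cases hx : x ∈ F <;> simp [hx]

theorem stmt2_general {X : Type*} [MeasurableSpace X] (η : Measure X) [IsFiniteMeasure η]
    (f : X → ℝ) (hf : Measurable f) (τ K : ℝ) (hτ : 0 < τ)
    (hyp : ∀ F : Set X, MeasurableSet F → ∫ x in F, (f x) ^ 2 ∂η ≤ τ + K * (η F).toReal) :
    ∃ f₁ f₂ : X → ℝ, f = f₁ + f₂ ∧ (∀ x, |f₂ x| ≤ 2 * Real.sqrt K) ∧
      ∫ x, (f₁ x) ^ 2 ∂η ≤ (4 / 3) * τ := by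
  set F : Set X := {x | 2 * Real.sqrt K < |f x|}
  have hF : MeasurableSet F := measurableSet_lt measurable_const hf.abs
  refine ⟨F.indicator f, Fᶜ.indicator f, (F.indicator_self_add_compl f).symm, fun x => ?_, ?_⟩
  · by_cases hx : x ∈ F
    · simp [hx, Real.sqrt_nonneg]
    · simpa [hx] using not_lt.mp hx
  · have key := setIntegral_mul_sub_one_le_of_le_add_measure hF (measure_ne_top η F) hτ.le
      (by norm_num : (0 : ℝ) ≤ 4) (fun x hx => four_mul_le_sq_of_two_mul_sqrt_lt_abs hx) (hyp F hF)
    rw [integral_sq_indicator hF]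
    linarith

/-- If `∫_F |f|² dη ≤ τ + K·η(F)` for every measurable `F`, then `f = f₁ + f₂`
with `‖f₂‖_∞ ≤ 2√K` and `∫ |f₁|² dη ≤ (4/3)τ`. -/
theorem stmt2 {X : Type*} [MeasurableSpace X] (η : Measure X) [IsFiniteMeasure η]
    (f : X → ℝ) (hf : Measurable f) (τ K : ℝ) (hτ : 0 < τ) (hK : 0 < K)
    (hyp : ∀ F : Set X, MeasurableSet F → ∫ x in F, (f x) ^ 2 ∂η ≤ τ + K * (η F).toReal) :
    ∃ f₁ f₂ : X → ℝ, f = f₁ + f₂ ∧ (∀ x, |f₂ x| ≤ 2 * Real.sqrt K) ∧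
      ∫ x, (f₁ x) ^ 2 ∂η ≤ (4 / 3) * τ :=
  stmt2_general η f hf τ K hτ hyp
end

section
/- Fix s ∈ (0,d), a measuring function h, κ > 0, and for N ≥ 2 let 𝔐_h(κ,N) be the unique M > 0 solving κ² ∫_{1/N}^1 [t / h^{−1}(Mt)^s]² dt/t = 1. Then 𝔐_h(2κ, 2N) ≤ C(s,d) · 𝔐_h(κ, N) for a constant C(s,d) depending only on s and d. -/
open MeasureTheory Set

/-- A measuring (gauge) function: continuous, strictly increasing, vanishing at 0,
tending to infinity, with `h(r)/r^d` non-increasing on `(0,∞)`. -/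
structure Measuring (d : ℕ) (h : ℝ → ℝ) : Prop where
  cont : ContinuousOn h (Set.Ici 0)
  mono : StrictMonoOn h (Set.Ici 0)
  zero : h 0 = 0
  tendsto : Filter.Tendsto h Filter.atTop Filter.atTop
  ratio : ∀ r₁ r₂ : ℝ, 0 < r₁ → r₁ ≤ r₂ → h r₂ / r₂ ^ (d : ℝ) ≤ h r₁ / r₁ ^ (d : ℝ)

/-!
The ratio condition gives `h (c r) ≤ c^d h r` for `c ≥ 1`, i.e. `c · h⁻¹(y) ≤ h⁻¹(c^d y)`.
With `c^s = 3`, multiplying `M` by `c^d` divides the integrand `t / h⁻¹(M t)^{2s}` by `9`,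
while doubling `M` amounts to the substitution `t ↦ 2t`. So if `M₂ > 2 c^d M₁`, the integral
defining `M₂`, over `(1/2N, 1]`, is at most `(1/9)(1/4 + 1) = 5/36` times the integral defining
`M₁`, over `(1/N, 1]`; but the two equations force the ratio to be exactly `1/4`.
-/

section Measuring

variable {d : ℕ} {h hinv : ℝ → ℝ}

lemma Measuring.apply_mul_le (hm : Measuring d h) {c r : ℝ} (hc : 1 ≤ c) (hr : 0 < r) :
    h (c * r) ≤ c ^ (d : ℝ) * h r := by
  have hratio := hm.ratio r (c * r) hr (le_mul_of_one_le_left hr.le hc)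
  rw [Real.mul_rpow (by linarith) hr.le,
    div_le_div_iff₀ (by positivity) (by positivity)] at hratio
  exact le_of_mul_le_mul_right (hratio.trans_eq (by ring)) (by positivity)

lemma Measuring.inv_pos (hm : Measuring d h)
    (hi : ∀ y : ℝ, 0 ≤ y → 0 ≤ hinv y ∧ h (hinv y) = y) {y : ℝ} (hy : 0 < y) :
    0 < hinv y := by
  obtain ⟨hnonneg, hy'⟩ := hi y hy.le
  refine hnonneg.lt_of_ne fun hzero => ?_
  rw [← hzero, hm.zero] at hy'
  exact hy.ne hy'

lemma Measuring.inv_mono (hm : Measuring d h)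
    (hi : ∀ y : ℝ, 0 ≤ y → 0 ≤ hinv y ∧ h (hinv y) = y) {a b : ℝ} (ha : 0 ≤ a) (hab : a ≤ b) :
    hinv a ≤ hinv b := by
  have hb : 0 ≤ b := ha.trans hab
  rw [← hm.mono.le_iff_le (hi a ha).1 (hi b hb).1, (hi a ha).2, (hi b hb).2]
  exact hab

lemma Measuring.mul_inv_le_inv_rpow_mul (hm : Measuring d h)
    (hi : ∀ y : ℝ, 0 ≤ y → 0 ≤ hinv y ∧ h (hinv y) = y) {c y : ℝ} (hc : 1 ≤ c) (hy : 0 < y) :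
    c * hinv y ≤ hinv (c ^ (d : ℝ) * y) := by
  have hr := hm.inv_pos hi hy
  have hcy : 0 ≤ c ^ (d : ℝ) * y := by positivity
  rw [← hm.mono.le_iff_le (mul_nonneg (by linarith) hr.le) (hi _ hcy).1, (hi _ hcy).2]
  calc h (c * hinv y) ≤ c ^ (d : ℝ) * h (hinv y) := hm.apply_mul_le hc hr
    _ = c ^ (d : ℝ) * y := by rw [(hi y hy.le).2]

end Measuring

noncomputable def gaugeIntegrand (hinv : ℝ → ℝ) (s M t : ℝ) : ℝ :=
  (t / hinv (M * t) ^ s) ^ 2 / t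

section gaugeIntegrand

variable {d : ℕ} {h hinv : ℝ → ℝ} {s M t : ℝ}

lemma gaugeIntegrand_nonneg (ht : 0 ≤ t) : 0 ≤ gaugeIntegrand hinv s M t :=
  div_nonneg (sq_nonneg _) ht

lemma gaugeIntegrand_two_mul :
    gaugeIntegrand hinv s (2 * M) t = gaugeIntegrand hinv s M (2 * t) / 2 := by
  simp only [gaugeIntegrand, mul_assoc, mul_left_comm 2 M]
  ring

lemma gaugeIntegrand_antitone (hm : Measuring d h)
    (hi : ∀ y : ℝ, 0 ≤ y → 0 ≤ hinv y ∧ h (hinv y) = y) (hs : 0 ≤ s) (ht : 0 < t)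
    (hM : 0 < M)
    {M' : ℝ} (hMM' : M ≤ M') :
    gaugeIntegrand hinv s M' t ≤ gaugeIntegrand hinv s M t := by
  have hpos := hm.inv_pos hi (mul_pos hM ht)
  have hpos' := hm.inv_pos hi (mul_pos (hM.trans_le hMM') ht)
  unfold gaugeIntegrand
  gcongr
  exact hm.inv_mono hi (by positivity) (by gcongr)

lemma gaugeIntegrand_rpow_mul_le (hm : Measuring d h)
    (hi : ∀ y : ℝ, 0 ≤ y → 0 ≤ hinv y ∧ h (hinv y) = y) (hs : 0 ≤ s) (ht : 0 < t)
    (hM : 0 < M)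
    {c : ℝ} (hc : 1 ≤ c) :
    gaugeIntegrand hinv s (c ^ (d : ℝ) * M) t ≤ gaugeIntegrand hinv s M t / (c ^ s) ^ 2 := by
  have hpos := hm.inv_pos hi (mul_pos hM ht)
  have hscale : c * hinv (M * t) ≤ hinv (c ^ (d : ℝ) * M * t) := by
    rw [mul_assoc]
    exact hm.mul_inv_le_inv_rpow_mul hi hc (mul_pos hM ht)
  calc gaugeIntegrand hinv s (c ^ (d : ℝ) * M) t
      ≤ (t / (c * hinv (M * t)) ^ s) ^ 2 / t := by
        have : 0 < c := by linarith
        have := hm.inv_pos hi (show 0 < c ^ (d : ℝ) * M * t by positivity)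
        unfold gaugeIntegrand
        gcongr
    _ = gaugeIntegrand hinv s M t / (c ^ s) ^ 2 := by
        rw [gaugeIntegrand, Real.mul_rpow (by linarith) hpos.le]
        ring

lemma gaugeIntegrand_le_of_rpow_mul_le (hm : Measuring d h)
    (hi : ∀ y : ℝ, 0 ≤ y → 0 ≤ hinv y ∧ h (hinv y) = y) (hs : 0 ≤ s) (ht : 0 < t)
    (hM : 0 < M) {c M' : ℝ} (hc : 1 ≤ c) (hMM' : c ^ (d : ℝ) * M ≤ M') :
    gaugeIntegrand hinv s M' t ≤ gaugeIntegrand hinv s M t / (c ^ s) ^ 2 :=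
  (gaugeIntegrand_antitone hm hi hs ht (by positivity) hMM').trans
    (gaugeIntegrand_rpow_mul_le hm hi hs ht hM hc)

end gaugeIntegrand

lemma setIntegral_Ioc_le_of_le_comp_two_mul {f g : ℝ → ℝ} {a : ℝ} (ha : 0 < a)
    (h4a : 4 * a ≤ 1) (hf : IntegrableOn f (Ioc a 1)) (hg : IntegrableOn g (Ioc (2 * a) 1))
    (hg0 : ∀ t ∈ Ioc (2 * a) 1, 0 ≤ g t) (hnear : ∀ t ∈ Ioc a (2 * a), f t ≤ g (2 * t) / 2)
    (hfar : ∀ t ∈ Ioc (2 * a) 1, f t ≤ g t) :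
    ∫ t in Ioc a 1, f t ≤ 5 / 4 * ∫ t in Ioc (2 * a) 1, g t := by
  have h2a : 2 * a ≤ 1 := by linarith
  have ha2a : a ≤ 2 * a := by linarith
  have hg' : IntervalIntegrable g volume (2 * a) (2 * (2 * a)) :=
    (intervalIntegrable_iff_integrableOn_Ioc_of_le (by linarith)).2
      (hg.mono_set (Ioc_subset_Ioc_right (by linarith)))
  have hdil_int : IntegrableOn (fun t => g (2 * t) / 2) (Ioc a (2 * a)) := by
    have := (hg'.comp_mul_left (c := 2)).div_const 2
    rwa [mul_div_cancel_left₀ _ two_ne_zero, mul_div_cancel_left₀ _ two_ne_zero,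
      intervalIntegrable_iff_integrableOn_Ioc_of_le (by linarith)] at this
  have hdil : ∫ t in Ioc a (2 * a), g (2 * t) / 2 =
      1 / 4 * ∫ t in Ioc (2 * a) (2 * (2 * a)), g t := by
    rw [integral_div, ← intervalIntegral.integral_of_le (by linarith),
      ← intervalIntegral.integral_of_le (by linarith),
      intervalIntegral.integral_comp_mul_left g two_ne_zero, smul_eq_mul]
    ring
  have hmid : ∫ t in Ioc (2 * a) (2 * (2 * a)), g t ≤ ∫ t in Ioc (2 * a) 1, g t :=
    setIntegral_mono_set hg ((ae_restrict_iff' measurableSet_Ioc).2 (.of_forall hg0))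
      (.of_forall (Ioc_subset_Ioc_right (by linarith)))
  calc ∫ t in Ioc a 1, f t = (∫ t in Ioc a (2 * a), f t) + ∫ t in Ioc (2 * a) 1, f t := by
        rw [← Ioc_union_Ioc_eq_Ioc ha2a h2a]
        exact setIntegral_union (Ioc_disjoint_Ioc_of_le le_rfl) measurableSet_Ioc
          (hf.mono_set (Ioc_subset_Ioc_right h2a)) (hf.mono_set (Ioc_subset_Ioc_left ha2a))
    _ ≤ (∫ t in Ioc a (2 * a), g (2 * t) / 2) + ∫ t in Ioc (2 * a) 1, g t :=
        add_le_add
          (setIntegral_mono_on (hf.mono_set (Ioc_subset_Ioc_right h2a)) hdil_int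
            measurableSet_Ioc hnear)
          (setIntegral_mono_on (hf.mono_set (Ioc_subset_Ioc_left ha2a)) hg
            measurableSet_Ioc hfar)
    _ ≤ 5 / 4 * ∫ t in Ioc (2 * a) 1, g t := by
        rw [hdil]
        linarith

lemma setIntegral_gaugeIntegrand_le {d : ℕ} {h hinv : ℝ → ℝ} (hm : Measuring d h)
    (hi : ∀ y : ℝ, 0 ≤ y → 0 ≤ hinv y ∧ h (hinv y) = y) {s a c M M' : ℝ} (hs : 0 ≤ s)
    (ha : 0 < a) (h4a : 4 * a ≤ 1) (hc : 1 ≤ c) (hM : 0 < M) (hMM' : 2 * c ^ (d : ℝ) * M ≤ M')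
    (hM'int : IntegrableOn (gaugeIntegrand hinv s M') (Ioc a 1))
    (hMint : IntegrableOn (gaugeIntegrand hinv s M) (Ioc (2 * a) 1)) :
    ∫ t in Ioc a 1, gaugeIntegrand hinv s M' t ≤
      5 / 4 * ∫ t in Ioc (2 * a) 1, gaugeIntegrand hinv s M t / (c ^ s) ^ 2 := by
  refine setIntegral_Ioc_le_of_le_comp_two_mul ha h4a hM'int (hMint.div_const _)
    (fun t ht => div_nonneg (gaugeIntegrand_nonneg (by linarith [ht.1])) (by positivity))
    (fun t ht => ?_) (fun t ht => ?_)
  · calc gaugeIntegrand hinv s M' t ≤ gaugeIntegrand hinv s (2 * M) t / (c ^ s) ^ 2 :=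
          gaugeIntegrand_le_of_rpow_mul_le hm hi hs (by linarith [ht.1]) (by positivity) hc
            (by linarith)
      _ = gaugeIntegrand hinv s M (2 * t) / (c ^ s) ^ 2 / 2 := by
          rw [gaugeIntegrand_two_mul]
          ring
  · have hcM : 0 ≤ c ^ (d : ℝ) * M := by positivity
    exact gaugeIntegrand_le_of_rpow_mul_le hm hi hs (by linarith [ht.1]) hM hc (by linarith)

theorem stmt6_general (d : ℕ) (s : ℝ) (hs : 0 < s) :
    ∃ C : ℝ, 0 < C ∧ ∀ h hinv : ℝ → ℝ, Measuring d h →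
      (∀ y : ℝ, 0 ≤ y → 0 ≤ hinv y ∧ h (hinv y) = y) →
      ∀ κ N M₁ M₂ : ℝ, 0 < κ → 2 ≤ N → 0 < M₁ → 0 < M₂ →
        κ ^ 2 * ∫ t in Set.Ioc (1 / N) 1, (t / (hinv (M₁ * t)) ^ s) ^ 2 / t = 1 →
        (2 * κ) ^ 2 * ∫ t in Set.Ioc (1 / (2 * N)) 1, (t / (hinv (M₂ * t)) ^ s) ^ 2 / t = 1 →
        M₂ ≤ C * M₁ := by
  obtain ⟨c, hc, hcs⟩ : ∃ c : ℝ, 1 ≤ c ∧ c ^ s = 3 :=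
    ⟨3 ^ s⁻¹, Real.one_le_rpow (by norm_num) (by positivity),
      Real.rpow_inv_rpow (by norm_num) hs.ne'⟩
  refine ⟨2 * c ^ (d : ℝ), by positivity, ?_⟩
  intro h hinv hm hi κ N M₁ M₂ _ hN hM₁ _ e₁ e₂
  rw [show 1 / N = 2 * (1 / (2 * N)) by field_simp] at e₁
  change κ ^ 2 * ∫ t in Ioc (2 * (1 / (2 * N))) 1, gaugeIntegrand hinv s M₁ t = 1 at e₁
  change (2 * κ) ^ 2 * ∫ t in Ioc (1 / (2 * N)) 1, gaugeIntegrand hinv s M₂ t = 1 at e₂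
  have h4a : 4 * (1 / (2 * N)) ≤ 1 := by
    rw [mul_one_div, div_le_one (by positivity)]
    linarith
  by_contra! hlt
  have hbound := setIntegral_gaugeIntegrand_le hm hi hs.le (by positivity) h4a hc hM₁ hlt.le
    (Integrable.of_integral_ne_zero (right_ne_zero_of_mul_eq_one e₂))
    (Integrable.of_integral_ne_zero (right_ne_zero_of_mul_eq_one e₁))
  rw [integral_div, hcs] at hbound
  nlinarith [mul_le_mul_of_nonneg_left hbound (by positivity : (0 : ℝ) ≤ 4 * κ ^ 2)]

/-- Doubling property of `𝔐_h`: if `M₁ = 𝔐_h(κ,N)` and `M₂ = 𝔐_h(2κ,2N)` (i.e. they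
solve the defining equations), then `M₂ ≤ C(s,d)·M₁`. -/
theorem stmt6 (d : ℕ) (s : ℝ) (hs : 0 < s) (hsd : s < d) :
    ∃ C : ℝ, 0 < C ∧ ∀ h hinv : ℝ → ℝ, Measuring d h →
      (∀ y : ℝ, 0 ≤ y → 0 ≤ hinv y ∧ h (hinv y) = y) →
      ∀ κ N M₁ M₂ : ℝ, 0 < κ → 2 ≤ N → 0 < M₁ → 0 < M₂ →
        κ ^ 2 * ∫ t in Set.Ioc (1 / N) 1, (t / (hinv (M₁ * t)) ^ s) ^ 2 / t = 1 →
        (2 * κ) ^ 2 * ∫ t in Set.Ioc (1 / (2 * N)) 1, (t / (hinv (M₂ * t)) ^ s) ^ 2 / t = 1 →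
        M₂ ≤ C * M₁ :=
  stmt6_general d s hs
end

section
/- Let s ∈ (0,d), κ > 0, c, C > 0, N > 2C, and let h be a measuring function. If M > 0 satisfies M ≥ c·κ·[ ∫_{h^{−1}(CM/N)}^{h^{−1}(M)} (h(y)/y^s)² dy/y ]^{1/2}, then M ≥ c'(c,C,s,d) · 𝔐_h(κ, N). -/
/-!
Put `J(a, b) = ∫_a^b u · h⁻¹(u)^{-2s} du`; the substitution `u = M★ t` turns the equation defining
`𝔐_h = M★` into `κ² J(M★/N, M★) = M★²`. Monotonicity of `h(r)/r^d` gives `h⁻¹(μu) ≤ μ^{1/d} h⁻¹(u)`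
for `μ ≤ 1`. On a block `A ≤ B ≤ 2A`, together with Bernoulli's inequality this gives
`h⁻¹(A)^{-2s} - h⁻¹(B)^{-2s} ≥ min(1, 2s/d) (1 - A/B) h⁻¹(A)^{-2s}`, and as `h ≥ A` on
`[h⁻¹(A), h⁻¹(B)]` the energy integral there dominates `J(A, B)` up to a constant: a discrete form
of `dy/y ≥ (1/d) du/u`. Dyadic blocks extend this to every interval. The same scaling gives
`J(μa, μb) ≥ μ^{2 - 2s/d} J(a, b)`. So if `M = λ M★` with `λ < 1/C`, the hypothesis on `M` bounds
`J(CM/N, M) ≥ (Cλ)^{2 - 2s/d} J(M★/N, M★/C)` from above, while `J(M★/N, M★/C)` is a fixed fraction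
of `J(M★/N, M★)`; this bounds `λ^{2s/d}` from below.
-/

open MeasureTheory Set

open intervalIntegral

theorem min_one_mul_one_sub_le_one_sub_rpow {x θ : ℝ} (hx0 : 0 ≤ x) (hx1 : x ≤ 1) (hθ : 0 < θ) :
    min 1 θ * (1 - x) ≤ 1 - x ^ θ := by
  rcases le_total 1 θ with hθ1 | hθ1
  · have := Real.rpow_le_rpow_of_exponent_ge' hx0 hx1 zero_le_one hθ1
    rw [Real.rpow_one] at this
    rw [min_eq_left hθ1]
    linarith
  · have := rpow_one_add_le_one_add_mul_self (s := x - 1) (by linarith) hθ.le hθ1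
    rw [add_sub_cancel] at this
    rw [min_eq_right hθ1]
    linarith

theorem le_of_le_two_mul_of_additive {Φ Ψ : ℝ → ℝ → ℝ}
    (hΦ : ∀ a b c, 0 < a → a ≤ b → b ≤ c → Φ a b + Φ b c = Φ a c)
    (hΨ : ∀ a b c, 0 < a → a ≤ b → b ≤ c → Ψ a b + Ψ b c = Ψ a c)
    (hloc : ∀ a b, 0 < a → a ≤ b → b ≤ 2 * a → Φ a b ≤ Ψ a b)
    {a b : ℝ} (ha : 0 < a) (hab : a ≤ b) : Φ a b ≤ Ψ a b := by
  obtain ⟨n, hn⟩ := pow_unbounded_of_one_lt (b / a) one_lt_two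
  rw [div_lt_iff₀ ha] at hn
  induction n generalizing b with
  | zero => exact hloc a b ha hab (by linarith)
  | succ n ih =>
    rcases le_or_gt b (2 * a) with hb | hb
    · exact hloc a b ha hab hb
    · have hmid : a ≤ b / 2 := by linarith
      rw [← hΦ a (b / 2) b ha hmid (by linarith), ← hΨ a (b / 2) b ha hmid (by linarith)]
      exact add_le_add (ih hmid (by rw [pow_succ] at hn; linarith))
        (hloc (b / 2) b (by linarith) (by linarith) (by linarith))

theorem div_rpow_sq_div_eq {y : ℝ} (hy : 0 < y) (a s : ℝ) :
    (a / y ^ s) ^ 2 / y = a ^ 2 * y ^ (-(2 * s + 1)) := by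
  rw [Real.rpow_neg hy.le, Real.rpow_add hy, Real.rpow_one, mul_comm 2 s, Real.rpow_mul hy.le]
  norm_cast
  field_simp

theorem intervalIntegrable_div_rpow_sq_div {f : ℝ → ℝ} {s Y₁ Y₂ : ℝ} (hY₁ : 0 < Y₁)
    (hY : Y₁ ≤ Y₂) (hf : ContinuousOn f (Icc Y₁ Y₂)) :
    IntervalIntegrable (fun y => (f y / y ^ s) ^ 2 / y) volume Y₁ Y₂ := by
  have hpos : ∀ y ∈ Icc Y₁ Y₂, 0 < y := fun y hy => hY₁.trans_le hy.1
  refine ContinuousOn.intervalIntegrable ?_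
  rw [uIcc_of_le hY]
  refine ((hf.div ?_ ?_).pow 2).div continuousOn_id fun y hy => (hpos y hy).ne'
  · exact continuousOn_id.rpow_const fun y hy => Or.inl (hpos y hy).ne'
  · exact fun y hy => (Real.rpow_pos_of_pos (hpos y hy) _).ne'

theorem sq_mul_sub_le_integral_div_rpow {f : ℝ → ℝ} {A s Y₁ Y₂ : ℝ} (hs : 0 < s)
    (hY₁ : 0 < Y₁) (hY : Y₁ ≤ Y₂) (hf : ContinuousOn f (Icc Y₁ Y₂)) (hA : 0 ≤ A)
    (hAf : ∀ y ∈ Icc Y₁ Y₂, A ≤ f y) :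
    A ^ 2 * ((Y₁ ^ (-(2 * s)) - Y₂ ^ (-(2 * s))) / (2 * s)) ≤
      ∫ y in Y₁..Y₂, (f y / y ^ s) ^ 2 / y := by
  have hpos : ∀ y ∈ uIcc Y₁ Y₂, 0 < y := fun y hy => hY₁.trans_le (uIcc_of_le hY ▸ hy).1
  have hpow : ∫ y in Y₁..Y₂, y ^ (-(2 * s + 1)) =
      (Y₁ ^ (-(2 * s)) - Y₂ ^ (-(2 * s))) / (2 * s) := by
    rw [integral_rpow (Or.inr ⟨by linarith, fun h0 => (hpos 0 h0).false⟩)]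
    rw [show -(2 * s + 1) + 1 = -(2 * s) by ring]
    field_simp
    ring
  rw [← hpow, ← intervalIntegral.integral_const_mul]
  refine integral_mono_on hY ?_ ?_ fun y hy => ?_
  · exact (continuousOn_const.mul
      (continuousOn_id.rpow_const fun y hy => Or.inl (hpos y hy).ne')).intervalIntegrable
  · exact intervalIntegrable_div_rpow_sq_div hY₁ hY hf
  · have hy0 : 0 < y := hY₁.trans_le hy.1
    rw [div_rpow_sq_div_eq hy0]
    gcongr
    exact hAf y hy

theorem rpow_inv_le_of_mul_rpow_le {c x θ : ℝ} (hc : 0 ≤ c) (hx : 0 < x) (hθ : 0 < θ)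
    (h : c * x ^ (2 - θ) ≤ x ^ 2) : c ^ θ⁻¹ ≤ x := by
  have hcx : c ≤ x ^ θ := by
    refine le_of_mul_le_mul_right ?_ (Real.rpow_pos_of_pos hx (2 - θ))
    rwa [← Real.rpow_add hx, add_sub_cancel, Real.rpow_two]
  calc c ^ θ⁻¹ ≤ (x ^ θ) ^ θ⁻¹ := by gcongr
    _ = x := Real.rpow_rpow_inv hx.le hθ.ne'

theorem div_rpow_sq_div_self (t : ℝ) {X : ℝ} (hX : 0 < X) (s : ℝ) :
    (t / X ^ s) ^ 2 / t = t * X ^ (-(2 * s)) := by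
  rw [Real.rpow_neg hX.le, mul_comm 2 s, Real.rpow_mul hX.le]
  norm_cast
  rcases eq_or_ne t 0 with rfl | ht
  · simp
  · field_simp

/-- `M · [t/h⁻¹(Mt)^s]²/t`, built from the integrand defining `𝔐_h`, in the variable `u = M t`. -/
noncomputable def gaugeWeight (hinv : ℝ → ℝ) (s u : ℝ) : ℝ := u * hinv u ^ (-(2 * s))

theorem gaugeWeight_nonneg {hinv : ℝ → ℝ} {s u : ℝ} (hu : 0 ≤ u) (hinv_nonneg : 0 ≤ hinv u) :
    0 ≤ gaugeWeight hinv s u :=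
  mul_nonneg hu (Real.rpow_nonneg hinv_nonneg _)

theorem integral_gaugeWeight_nonneg {hinv : ℝ → ℝ} {s a b : ℝ}
    (hinv_nonneg : ∀ u, 0 ≤ u → 0 ≤ hinv u) (ha : 0 ≤ a) (hab : a ≤ b) :
    0 ≤ ∫ u in a..b, gaugeWeight hinv s u :=
  integral_nonneg hab fun u hu => gaugeWeight_nonneg (ha.trans hu.1) (hinv_nonneg u (ha.trans hu.1))

theorem setIntegral_Ioc_eq_integral_gaugeWeight {hinv : ℝ → ℝ} {s M a b : ℝ}
    (hinv_pos : ∀ u, 0 < u → 0 < hinv u) (hM : 0 < M) (ha : 0 < a) (hab : a ≤ b) :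
    ∫ t in Ioc a b, (t / hinv (M * t) ^ s) ^ 2 / t =
      (∫ u in M * a..M * b, gaugeWeight hinv s u) / M ^ 2 := by
  have hcongr : ∫ t in a..b, (t / hinv (M * t) ^ s) ^ 2 / t =
      ∫ t in a..b, gaugeWeight hinv s (M * t) / M := by
    refine integral_congr fun t ht => ?_
    have ht0 : 0 < t := ha.trans_le (uIcc_of_le hab ▸ ht).1
    rw [div_rpow_sq_div_self t (hinv_pos _ (mul_pos hM ht0)), gaugeWeight]
    field_simp
  rw [← integral_of_le hab, hcongr, intervalIntegral.integral_div, ← smul_integral_comp_mul_left,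
    smul_eq_mul]
  field_simp

namespace Measuring

variable {d : ℕ} {h hinv : ℝ → ℝ} {s : ℝ} (hm : Measuring d h)
  (hh : ∀ y : ℝ, 0 ≤ y → 0 ≤ hinv y ∧ h (hinv y) = y)
include hm hh

theorem hinv_mono {u v : ℝ} (hu : 0 ≤ u) (huv : u ≤ v) : hinv u ≤ hinv v := by
  have hv := hh v (hu.trans huv)
  refine not_lt.mp fun hlt => huv.not_gt ?_
  simpa [(hh u hu).2, hv.2] using hm.mono hv.1 (hh u hu).1 hlt

theorem hinv_pos {u : ℝ} (hu : 0 < u) : 0 < hinv u := by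
  refine (hh u hu.le).1.lt_of_ne fun h0 => hu.ne ?_
  rw [← (hh u hu.le).2, ← h0, hm.zero]

theorem le_apply_of_hinv_le {A y : ℝ} (hA : 0 ≤ A) (hy : hinv A ≤ y) : A ≤ h y := by
  have h0 := (hh A hA).1
  simpa [(hh A hA).2] using hm.mono.monotoneOn h0 (h0.trans hy) hy

theorem hinv_mul_le (hd : d ≠ 0) {μ u : ℝ} (hμ0 : 0 < μ) (hμ1 : μ ≤ 1) (hu : 0 < u) :
    hinv (μ * u) ≤ μ ^ (d : ℝ)⁻¹ * hinv u := by
  have hd' : (d : ℝ) ≠ 0 := Nat.cast_ne_zero.mpr hd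
  have hμu : 0 < μ * u := mul_pos hμ0 hu
  have hr₁ := hm.hinv_pos hh hμu
  have hr₂ := hm.hinv_pos hh hu
  have hratio := hm.ratio _ _ hr₁ (hm.hinv_mono hh hμu.le (mul_le_of_le_one_left hu.le hμ1))
  rw [(hh _ hμu.le).2, (hh _ hu.le).2, div_le_div_iff₀ (by positivity) (by positivity)] at hratio
  have hpow : hinv (μ * u) ^ (d : ℝ) ≤ μ * hinv u ^ (d : ℝ) := by nlinarith
  calc hinv (μ * u) = (hinv (μ * u) ^ (d : ℝ)) ^ (d : ℝ)⁻¹ :=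
        (Real.rpow_rpow_inv hr₁.le hd').symm
    _ ≤ (μ * hinv u ^ (d : ℝ)) ^ (d : ℝ)⁻¹ := by gcongr
    _ = μ ^ (d : ℝ)⁻¹ * hinv u := by
        rw [Real.mul_rpow hμ0.le (by positivity), Real.rpow_rpow_inv hr₂.le hd']

theorem rpow_mul_hinv_rpow_le (hd : d ≠ 0) (hs : 0 ≤ s) {μ u : ℝ} (hμ0 : 0 < μ) (hμ1 : μ ≤ 1)
    (hu : 0 < u) : μ ^ (-(2 * s / d)) * hinv u ^ (-(2 * s)) ≤ hinv (μ * u) ^ (-(2 * s)) := by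
  have h₁ := Real.rpow_le_rpow_of_nonpos (hm.hinv_pos hh (mul_pos hμ0 hu))
    (hm.hinv_mul_le hh hd hμ0 hμ1 hu) (by linarith : -(2 * s) ≤ 0)
  rwa [Real.mul_rpow (by positivity) (hm.hinv_pos hh hu).le, ← Real.rpow_mul hμ0.le,
    inv_mul_eq_div, neg_div] at h₁

theorem intervalIntegrable_gaugeWeight (hs : 0 ≤ s) {a b : ℝ} (ha : 0 < a) (hab : a ≤ b) :
    IntervalIntegrable (gaugeWeight hinv s) volume a b := by
  have hanti : AntitoneOn (fun u => hinv u ^ (-(2 * s))) (uIcc a b) := by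
    rw [uIcc_of_le hab]
    exact fun x hx y _ hxy => Real.rpow_le_rpow_of_nonpos (hm.hinv_pos hh (ha.trans_le hx.1))
      (hm.hinv_mono hh (ha.trans_le hx.1).le hxy) (by linarith)
  exact hanti.intervalIntegrable.continuousOn_mul continuousOn_id

theorem integral_gaugeWeight_add (hs : 0 ≤ s) {a b c : ℝ} (ha : 0 < a) (hab : a ≤ b)
    (hbc : b ≤ c) :
    (∫ u in a..b, gaugeWeight hinv s u) + ∫ u in b..c, gaugeWeight hinv s u =
      ∫ u in a..c, gaugeWeight hinv s u :=
  integral_add_adjacent_intervals (hm.intervalIntegrable_gaugeWeight hh hs ha hab)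
    (hm.intervalIntegrable_gaugeWeight hh hs (ha.trans_le hab) hbc)

theorem integral_gaugeWeight_le_of_le_left (hs : 0 ≤ s) {a a' b : ℝ} (ha : 0 < a) (haa' : a ≤ a')
    (ha'b : a' ≤ b) :
    ∫ u in a'..b, gaugeWeight hinv s u ≤ ∫ u in a..b, gaugeWeight hinv s u := by
  rw [← hm.integral_gaugeWeight_add hh hs ha haa' ha'b]
  linarith [integral_gaugeWeight_nonneg (s := s) (fun u hu => (hh u hu).1) ha.le haa']

theorem integral_gaugeWeight_le (hs : 0 ≤ s) {a b : ℝ} (ha : 0 < a) (hab : a ≤ b) :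
    ∫ u in a..b, gaugeWeight hinv s u ≤ (b ^ 2 - a ^ 2) / 2 * hinv a ^ (-(2 * s)) := by
  rw [← integral_id, ← intervalIntegral.integral_mul_const]
  refine integral_mono_on hab (hm.intervalIntegrable_gaugeWeight hh hs ha hab)
    (continuousOn_id.mul continuousOn_const).intervalIntegrable fun u hu => ?_
  exact mul_le_mul_of_nonneg_left (Real.rpow_le_rpow_of_nonpos (hm.hinv_pos hh ha)
    (hm.hinv_mono hh ha.le hu.1) (by linarith)) (ha.le.trans hu.1)

theorem le_integral_gaugeWeight (hs : 0 ≤ s) {a b : ℝ} (ha : 0 < a) (hab : a ≤ b) :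
    (b ^ 2 - a ^ 2) / 2 * hinv b ^ (-(2 * s)) ≤ ∫ u in a..b, gaugeWeight hinv s u := by
  rw [← integral_id, ← intervalIntegral.integral_mul_const]
  refine integral_mono_on hab (continuousOn_id.mul continuousOn_const).intervalIntegrable
    (hm.intervalIntegrable_gaugeWeight hh hs ha hab) fun u hu => ?_
  have hu0 : 0 < u := ha.trans_le hu.1
  exact mul_le_mul_of_nonneg_left (Real.rpow_le_rpow_of_nonpos (hm.hinv_pos hh hu0)
    (hm.hinv_mono hh hu0.le hu.2) (by linarith)) hu0.le

/-- On `[b/(2K), b/K]` the weight is at least `u · h⁻¹(b/K)^{-2s}`, and on `[b/K, b]` it is at most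
that. -/
theorem integral_gaugeWeight_le_mul_integral_div (hs : 0 ≤ s) {a b K : ℝ} (ha : 0 < a)
    (hK : 1 ≤ K) (hab : 2 * K * a ≤ b) :
    ∫ u in a..b, gaugeWeight hinv s u ≤
      (1 + 4 * K ^ 2 / 3) * ∫ u in a..b / K, gaugeWeight hinv s u := by
  have hK0 : 0 < K := one_pos.trans_le hK
  have hb : 0 < b := by nlinarith
  have ha₂ : a ≤ b / (2 * K) := by rw [le_div_iff₀ (by positivity)]; linarith
  have ha₂₃ : b / (2 * K) ≤ b / K := div_le_div_of_nonneg_left hb.le hK0 (by linarith)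
  have ha₃ : b / K ≤ b := div_le_self hb.le hK
  set J := ∫ u in a..b / K, gaugeWeight hinv s u
  set X := hinv (b / K) ^ (-(2 * s))
  have hX : 0 ≤ X := Real.rpow_nonneg (hh _ (by positivity)).1 _
  calc ∫ u in a..b, gaugeWeight hinv s u = J + ∫ u in b / K..b, gaugeWeight hinv s u :=
        (hm.integral_gaugeWeight_add hh hs ha (ha₂.trans ha₂₃) ha₃).symm
    _ ≤ J + b ^ 2 / 2 * X := by
        gcongr
        refine (hm.integral_gaugeWeight_le hh hs (ha.trans_le (ha₂.trans ha₂₃)) ha₃).trans ?_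
        gcongr
        linarith [sq_nonneg (b / K)]
    _ = J + 4 * K ^ 2 / 3 * (((b / K) ^ 2 - (b / (2 * K)) ^ 2) / 2 * X) := by
        field_simp
        ring
    _ ≤ J + 4 * K ^ 2 / 3 * ∫ u in b / (2 * K)..b / K, gaugeWeight hinv s u := by
        gcongr
        exact hm.le_integral_gaugeWeight hh hs (ha.trans_le ha₂) ha₂₃
    _ ≤ J + 4 * K ^ 2 / 3 * J := by
        gcongr
        exact hm.integral_gaugeWeight_le_of_le_left hh hs ha ha₂ ha₂₃
    _ = (1 + 4 * K ^ 2 / 3) * J := by ring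

theorem integral_energy_add {a b c : ℝ} (ha : 0 < a) (hab : a ≤ b) (hbc : b ≤ c) :
    (∫ y in hinv a..hinv b, (h y / y ^ s) ^ 2 / y) + ∫ y in hinv b..hinv c, (h y / y ^ s) ^ 2 / y =
      ∫ y in hinv a..hinv c, (h y / y ^ s) ^ 2 / y := by
  have hYa := hm.hinv_pos hh ha
  have hYab := hm.hinv_mono hh ha.le hab
  have hYbc := hm.hinv_mono hh (ha.le.trans hab) hbc
  have hcont : ContinuousOn h (Icc (hinv a) (hinv c)) := hm.cont.mono fun y hy => hYa.le.trans hy.1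
  exact integral_add_adjacent_intervals
    (intervalIntegrable_div_rpow_sq_div hYa hYab (hcont.mono (Icc_subset_Icc_right hYbc)))
    (intervalIntegrable_div_rpow_sq_div (hYa.trans_le hYab) hYbc
      (hcont.mono (Icc_subset_Icc_left hYab)))

theorem mul_integral_gaugeWeight_le_of_le_two_mul (hd : d ≠ 0) (hs : 0 < s) {A B : ℝ}
    (hA : 0 < A) (hAB : A ≤ B) (hB : B ≤ 2 * A) :
    min 1 (2 * s / d) / (6 * s) * ∫ u in A..B, gaugeWeight hinv s u ≤
      ∫ y in hinv A..hinv B, (h y / y ^ s) ^ 2 / y := by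
  have hB0 : 0 < B := hA.trans_le hAB
  have hY₁ := hm.hinv_pos hh hA
  have hY := hm.hinv_mono hh hA.le hAB
  set X := hinv A ^ (-(2 * s))
  set m := min 1 (2 * s / d)
  have hm0 : 0 < m := lt_min one_pos (by positivity)
  have hX : 0 < X := Real.rpow_pos_of_pos hY₁ _
  have hq : 0 < A / B := div_pos hA hB0
  have hq1 : A / B ≤ 1 := (div_le_one hB0).mpr hAB
  have hscale : (A / B) ^ (-(2 * s / d)) * hinv B ^ (-(2 * s)) ≤ X := by
    simpa [div_mul_cancel₀ _ hB0.ne'] using hm.rpow_mul_hinv_rpow_le hh hd hs.le hq hq1 hB0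
  have hdrop : m * (1 - A / B) * X ≤ X - hinv B ^ (-(2 * s)) := by
    have hbern := min_one_mul_one_sub_le_one_sub_rpow hq.le hq1 (by positivity : 0 < 2 * s / d)
    rw [Real.rpow_neg hq.le, inv_mul_le_iff₀ (by positivity)] at hscale
    nlinarith
  calc m / (6 * s) * ∫ u in A..B, gaugeWeight hinv s u
      ≤ m / (6 * s) * ((B ^ 2 - A ^ 2) / 2 * X) :=
        mul_le_mul_of_nonneg_left (hm.integral_gaugeWeight_le hh hs.le hA hAB) (by positivity)
    _ ≤ A ^ 2 * (m * (1 - A / B) * X / (2 * s)) := by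
        rw [div_mul_eq_mul_div, div_le_iff₀ (by positivity)]
        field_simp
        nlinarith [mul_nonneg (sub_nonneg.mpr hAB)
          (mul_nonneg (by linarith : 0 ≤ 2 * A - B) (by linarith : 0 ≤ 3 * A + B))]
    _ ≤ A ^ 2 * ((X - hinv B ^ (-(2 * s))) / (2 * s)) := by gcongr
    _ ≤ ∫ y in hinv A..hinv B, (h y / y ^ s) ^ 2 / y :=
        sq_mul_sub_le_integral_div_rpow hs hY₁ hY (hm.cont.mono fun y hy => hY₁.le.trans hy.1)
          hA.le fun y hy => hm.le_apply_of_hinv_le hh hA.le hy.1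

theorem mul_integral_gaugeWeight_le (hd : d ≠ 0) (hs : 0 < s) {A B : ℝ} (hA : 0 < A)
    (hAB : A ≤ B) :
    min 1 (2 * s / d) / (6 * s) * ∫ u in A..B, gaugeWeight hinv s u ≤
      ∫ y in hinv A..hinv B, (h y / y ^ s) ^ 2 / y :=
  le_of_le_two_mul_of_additive
    (Φ := fun a b => min 1 (2 * s / d) / (6 * s) * ∫ u in a..b, gaugeWeight hinv s u)
    (Ψ := fun a b => ∫ y in hinv a..hinv b, (h y / y ^ s) ^ 2 / y)
    (fun a b c ha hab hbc => by rw [← mul_add, hm.integral_gaugeWeight_add hh hs.le ha hab hbc])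
    (fun a b c ha hab hbc => hm.integral_energy_add hh ha hab hbc)
    (fun a b ha hab hb => hm.mul_integral_gaugeWeight_le_of_le_two_mul hh hd hs ha hab hb) hA hAB

theorem rpow_mul_gaugeWeight_le (hd : d ≠ 0) (hs : 0 ≤ s) {μ u : ℝ} (hμ0 : 0 < μ) (hμ1 : μ ≤ 1)
    (hu : 0 < u) : μ ^ (1 - 2 * s / d) * gaugeWeight hinv s u ≤ gaugeWeight hinv s (μ * u) := by
  have h₁ := hm.rpow_mul_hinv_rpow_le hh hd hs hμ0 hμ1 hu
  calc μ ^ (1 - 2 * s / d) * gaugeWeight hinv s u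
      = μ * u * (μ ^ (-(2 * s / d)) * hinv u ^ (-(2 * s))) := by
        rw [gaugeWeight, sub_eq_add_neg, Real.rpow_add hμ0, Real.rpow_one]
        ring
    _ ≤ gaugeWeight hinv s (μ * u) := by
        unfold gaugeWeight
        gcongr

theorem rpow_mul_integral_gaugeWeight_le (hd : d ≠ 0) (hs : 0 ≤ s) {μ a b : ℝ} (hμ0 : 0 < μ)
    (hμ1 : μ ≤ 1) (ha : 0 < a) (hab : a ≤ b) :
    μ ^ (2 - 2 * s / d) * ∫ u in a..b, gaugeWeight hinv s u ≤
      ∫ u in μ * a..μ * b, gaugeWeight hinv s u := by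
  have hint : IntervalIntegrable (fun u => gaugeWeight hinv s (μ * u)) volume a b := by
    simpa [mul_div_cancel_left₀ _ hμ0.ne'] using
      (hm.intervalIntegrable_gaugeWeight hh hs (mul_pos hμ0 ha)
        (mul_le_mul_of_nonneg_left hab hμ0.le)).comp_mul_left (c := μ)
  rw [← smul_integral_comp_mul_left, smul_eq_mul, ← intervalIntegral.integral_const_mul,
    ← intervalIntegral.integral_const_mul]
  refine integral_mono_on hab ((hm.intervalIntegrable_gaugeWeight hh hs ha hab).const_mul _)
    (hint.const_mul _) fun u hu => ?_
  rw [show (2 : ℝ) - 2 * s / d = 1 + (1 - 2 * s / d) by ring, Real.rpow_add hμ0, Real.rpow_one,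
    mul_assoc]
  exact mul_le_mul_of_nonneg_left
    (hm.rpow_mul_gaugeWeight_le hh hd hs hμ0 hμ1 (ha.trans_le hu.1)) hμ0.le

theorem rpow_mul_integral_gaugeWeight_le_of_mul_le_one (hd : d ≠ 0) (hs : 0 ≤ s)
    {C K N lam Mstar : ℝ} (hC : 0 < C) (hCK : C ≤ K) (hKN : K ≤ N) (hlam : 0 < lam)
    (hKlam : K * lam ≤ 1) (hMs : 0 < Mstar) :
    (K * lam) ^ (2 - 2 * s / d) * ∫ u in Mstar / N..Mstar / K, gaugeWeight hinv s u ≤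
      ∫ u in C * (lam * Mstar) / N..lam * Mstar, gaugeWeight hinv s u := by
  have hK0 : 0 < K := hC.trans_le hCK
  have hN : 0 < N := hK0.trans_le hKN
  have hscale := hm.rpow_mul_integral_gaugeWeight_le hh hd hs (by positivity) hKlam
    (a := Mstar / N) (b := Mstar / K) (by positivity) (div_le_div_of_nonneg_left hMs.le hK0 hKN)
  rw [show K * lam * (Mstar / N) = K * (lam * Mstar) / N by ring,
    show K * lam * (Mstar / K) = lam * Mstar by field_simp] at hscale
  refine hscale.trans (hm.integral_gaugeWeight_le_of_le_left hh hs (by positivity) ?_ ?_)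
  · gcongr
  · rw [div_le_iff₀ hN]
    nlinarith [mul_pos hlam hMs]

theorem min_mul_le_of_integral_gaugeWeight_le (hd : d ≠ 0) (hs : 0 < s)
    {κ N C K L M Mstar : ℝ} (hC : 0 < C) (hCK : C ≤ K) (hK : 1 ≤ K) (hKN : 2 * K ≤ N)
    (hL : 0 < L) (hM : 0 < M) (hMs : 0 < Mstar)
    (hstar : κ ^ 2 * ∫ u in Mstar / N..Mstar, gaugeWeight hinv s u = Mstar ^ 2)
    (hbound : L * κ ^ 2 * ∫ u in C * M / N..M, gaugeWeight hinv s u ≤ M ^ 2) :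
    min (1 / K) ((L * K ^ (2 - 2 * s / d) / (1 + 4 * K ^ 2 / 3)) ^ (2 * s / d)⁻¹) * Mstar ≤
      M := by
  obtain ⟨lam, hlam, rfl⟩ : ∃ lam, 0 < lam ∧ M = lam * Mstar :=
    ⟨M / Mstar, div_pos hM hMs, (div_mul_cancel₀ M hMs.ne').symm⟩
  set θ := 2 * s / d
  set P := 1 + 4 * K ^ 2 / 3
  set J₀ := ∫ u in Mstar / N..Mstar / K, gaugeWeight hinv s u
  have hK0 : 0 < K := one_pos.trans_le hK
  have hN : 0 < N := by linarith
  rcases le_total (1 / K) lam with hlarge | hsmall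
  · calc min (1 / K) _ * Mstar ≤ 1 / K * Mstar := by gcongr; exact min_le_left _ _
      _ ≤ lam * Mstar := by gcongr
  have hKlam : K * lam ≤ 1 := by rwa [le_div_iff₀ hK0, mul_comm] at hsmall
  have htrim : Mstar ^ 2 ≤ P * (κ ^ 2 * J₀) := by
    have hKMs : 2 * K * (Mstar / N) ≤ Mstar := by
      rw [mul_div_assoc']
      exact div_le_of_le_mul₀ hN.le hMs.le (by nlinarith)
    rw [← hstar]
    exact (mul_le_mul_of_nonneg_left (hm.integral_gaugeWeight_le_mul_integral_div hh hs.le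
      (by positivity) hK hKMs) (sq_nonneg κ)).trans_eq (by ring)
  have hscale := hm.rpow_mul_integral_gaugeWeight_le_of_mul_le_one hh hd hs.le hC hCK
    (by linarith : K ≤ N) hlam hKlam hMs
  have hlam_ge : L * K ^ (2 - θ) / P * lam ^ (2 - θ) ≤ lam ^ 2 := by
    rw [div_mul_eq_mul_div, div_le_iff₀ (by positivity)]
    refine le_of_mul_le_mul_right ?_ (pow_pos hMs 2)
    calc L * K ^ (2 - θ) * lam ^ (2 - θ) * Mstar ^ 2
        = L * (K * lam) ^ (2 - θ) * Mstar ^ 2 := by rw [Real.mul_rpow hK0.le hlam.le]; ring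
      _ ≤ L * (K * lam) ^ (2 - θ) * (P * (κ ^ 2 * J₀)) := by gcongr
      _ = P * (L * κ ^ 2 * ((K * lam) ^ (2 - θ) * J₀)) := by ring
      _ ≤ P * (lam * Mstar) ^ 2 := by gcongr; exact (by gcongr : _ ≤ _).trans hbound
      _ = lam ^ 2 * P * Mstar ^ 2 := by ring
  calc min (1 / K) _ * Mstar ≤ (L * K ^ (2 - θ) / P) ^ θ⁻¹ * Mstar := by
        gcongr; exact min_le_right _ _
    _ ≤ lam * Mstar := by
        gcongr
        exact rpow_inv_le_of_mul_rpow_le (by positivity) hlam (by positivity) hlam_ge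

end Measuring

/-- If `M ≥ c·κ·[∫_{h⁻¹(CM/N)}^{h⁻¹(M)} (h(y)/y^s)² dy/y]^{1/2}` with `N > 2C`, then
`M ≥ c'(c,C,s,d)·𝔐_h(κ,N)`, where `𝔐_h(κ,N)` is the unique solution `M★` of
`κ² ∫_{1/N}^1 [t/h⁻¹(M★t)^s]² dt/t = 1`. -/
theorem stmt8 (d : ℕ) (s : ℝ) (hs : 0 < s) (hsd : s < d)
    (c C : ℝ) (hc0 : 0 < c) (hC : 0 < C) :
    ∃ c' : ℝ, 0 < c' ∧ ∀ h hinv : ℝ → ℝ, Measuring d h →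
      (∀ y : ℝ, 0 ≤ y → 0 ≤ hinv y ∧ h (hinv y) = y) →
      ∀ κ N M Mstar : ℝ, 0 < κ → 2 ≤ N → 2 * C < N → 0 < M → 0 < Mstar →
        κ ^ 2 * ∫ t in Set.Ioc (1 / N) 1, (t / (hinv (Mstar * t)) ^ s) ^ 2 / t = 1 →
        c * κ * Real.sqrt
          (∫ y in Set.Ioc (hinv (C * M / N)) (hinv M), (h y / y ^ s) ^ 2 / y) ≤ M →
        c' * Mstar ≤ M := by
  have hd : d ≠ 0 := by rintro rfl; norm_num at hsd; linarith
  set K := max C 1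
  set L := c ^ 2 * (min 1 (2 * s / d) / (6 * s))
  refine ⟨min (1 / K) ((L * K ^ (2 - 2 * s / d) / (1 + 4 * K ^ 2 / 3)) ^ (2 * s / d)⁻¹),
    by positivity, ?_⟩
  intro h hinv hm hh κ N M Mstar hκ hN2 hCN hM hMs hdef hbound
  have hN : 0 < N := by linarith
  have hstar : κ ^ 2 * ∫ u in Mstar / N..Mstar, gaugeWeight hinv s u = Mstar ^ 2 := by
    rw [setIntegral_Ioc_eq_integral_gaugeWeight (fun u => hm.hinv_pos hh) hMs (by positivity)
      (by rw [div_le_one hN]; linarith), mul_one_div, mul_one] at hdef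
    field_simp at hdef
    exact hdef
  have hCMN : 0 < C * M / N := by positivity
  have hCMN_le : C * M / N ≤ M := div_le_of_le_mul₀ hN.le hM.le (by nlinarith)
  have henergy := hm.mul_integral_gaugeWeight_le hh hd hs hCMN hCMN_le
  have hJ := integral_gaugeWeight_nonneg (s := s) (fun u hu => (hh u hu).1) hCMN.le hCMN_le
  rw [← integral_of_le (hm.hinv_mono hh hCMN.le hCMN_le)] at hbound
  have hsq := pow_le_pow_left₀ (by positivity) hbound 2
  rw [mul_pow, Real.sq_sqrt ((mul_nonneg (by positivity) hJ).trans henergy)] at hsq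
  refine hm.min_mul_le_of_integral_gaugeWeight_le hh hd hs hC (le_max_left C 1) (le_max_right C 1)
    (by rw [mul_max_of_nonneg _ _ zero_le_two]; exact max_le hCN.le (by linarith))
    (by positivity) hM hMs hstar ?_
  calc L * κ ^ 2 * ∫ u in C * M / N..M, gaugeWeight hinv s u
      = (c * κ) ^ 2 *
          (min 1 (2 * s / d) / (6 * s) * ∫ u in C * M / N..M, gaugeWeight hinv s u) := by
        ring
    _ ≤ M ^ 2 := (mul_le_mul_of_nonneg_left henergy (by positivity)).trans hsq
end

section
/- Let ν be a finite positive Borel measure on ℝ^d, 0 < s < d, and C₂ > 10·2^s. Suppose x₀ ∈ ℝ^d satisfies |ν|(B(x₀, r)) < C₂^{−1} P r^s for all r > 0 and |ν|(B(x₀, t₁)) = 0 for some t₁ > 0, and that |R^s_{ν,ε}(x₀)| > P for some ε > 0.9·t₁, where R^s_{ν,ε}(x) = ∫_{|y−x|>ε} (y−x)/|y−x|^{s+1} dν(y). Then for C₂ large enough (depending only on s), every x with |x − x₀| < 0.4·t₁ satisfies sup_{δ>0} |R^s_{ν,δ}(x)| > 0.8·P. -/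
open MeasureTheory Set

/-- The `ε`-truncated vector-valued `s`-Riesz transform of a (positive) measure `ν`. -/
noncomputable def rieszT (d : ℕ) (s : ℝ) (ν : Measure (EuclideanSpace ℝ (Fin d)))
    (ε : ℝ) (x : EuclideanSpace ℝ (Fin d)) : EuclideanSpace ℝ (Fin d) :=
  ∫ y in {y | ε < dist y x}, (‖y - x‖ ^ (s + 1))⁻¹ • (y - x) ∂ν

/-!
Put `δ = ε - |x - x₀|`. Then `{|y - x₀| > ε} ⊆ {|y - x| > δ}`, so `R_δ(x) - R_ε(x₀)` is the
integral of the kernel difference `K(y - x) - K(y - x₀)` over `|y - x₀| > ε` plus the integral of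
`K(y - x)` over what is left, which lies in `B̄(x₀, ε)`. The kernel is Lipschitz at scale
`|y - x₀|`, so the first part is at most `C(s) |x - x₀| ∫_{|y - x₀| > ε} |y - x₀|^{-s-1} dν`, and
summing the growth bound over dyadic shells makes this `O(P / C₂)`; the second part is at most
`δ^{-s} ν(B(x₀, 2ε)) = O(P / C₂)` as well. For `C₂` large both together are at most `0.2 P`.
-/

open Metric

theorem abs_rpow_neg_sub_rpow_neg_le {q a b c : ℝ} (hq : 0 ≤ q) (hc : 0 < c) (ha : c ≤ a)
    (hb : c ≤ b) : |a ^ (-q) - b ^ (-q)| ≤ q * c ^ (-q - 1) * |a - b| := by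
  have hderiv : ∀ t ∈ Ici c,
      HasDerivWithinAt (fun t : ℝ => t ^ (-q)) (-q * t ^ (-q - 1)) (Ici c) t :=
    fun t ht => (Real.hasDerivAt_rpow_const (Or.inl (hc.trans_le ht).ne')).hasDerivWithinAt
  have hbound : ∀ t ∈ Ici c, ‖-q * t ^ (-q - 1)‖ ≤ q * c ^ (-q - 1) := by
    intro t ht
    rw [norm_mul, norm_neg, Real.norm_of_nonneg hq,
      Real.norm_of_nonneg (Real.rpow_nonneg (hc.le.trans ht) _)]
    exact mul_le_mul_of_nonneg_left (Real.rpow_le_rpow_of_nonpos hc ht (by linarith)) hq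
  simpa only [Real.norm_eq_abs] using
    Convex.norm_image_sub_le_of_norm_hasDerivWithin_le hderiv hbound (convex_Ici c) hb ha

section Kernel

variable {X : Type*} [NormedAddCommGroup X] [NormedSpace ℝ X] {s : ℝ} {u v : X}

noncomputable def rieszKernel (s : ℝ) (v : X) : X := (‖v‖ ^ (s + 1))⁻¹ • v

theorem rieszKernel_eq_rpow_neg_smul (s : ℝ) (v : X) :
    rieszKernel s v = ‖v‖ ^ (-(s + 1)) • v := by
  rw [rieszKernel, Real.rpow_neg (norm_nonneg v)]

theorem norm_rieszKernel (s : ℝ) (hv : v ≠ 0) : ‖rieszKernel s v‖ = ‖v‖ ^ (-s) := by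
  rw [rieszKernel_eq_rpow_neg_smul, norm_smul,
    Real.norm_of_nonneg (Real.rpow_nonneg (norm_nonneg v) _),
    ← Real.rpow_add_one (norm_ne_zero_iff.2 hv)]
  ring_nf

theorem norm_rieszKernel_le (hs : 0 ≤ s) {r : ℝ} (hr : 0 < r) (hv : r ≤ ‖v‖) :
    ‖rieszKernel s v‖ ≤ r ^ (-s) := by
  rw [norm_rieszKernel s (norm_pos_iff.1 (hr.trans_le hv))]
  exact Real.rpow_le_rpow_of_nonpos hr hv (neg_nonpos.2 hs)

theorem norm_rieszKernel_sub_le (hs : -1 ≤ s) (hv : v ≠ 0) (huv : ‖u - v‖ ≤ ‖v‖ / 2) :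
    ‖rieszKernel s u - rieszKernel s v‖ ≤
      2 ^ (s + 1) * (2 * s + 3) * ‖u - v‖ * ‖v‖ ^ (-(s + 1)) := by
  set q := s + 1
  have hq : 0 ≤ q := by linarith
  have hB : 0 < ‖v‖ / 2 := by positivity
  have hA : ‖v‖ / 2 ≤ ‖u‖ := by linarith [norm_sub_norm_le v u, norm_sub_rev u v]
  have hAB : |‖u‖ - ‖v‖| ≤ ‖u - v‖ := abs_norm_sub_norm_le u v
  have hdecomp : rieszKernel s u - rieszKernel s v
      = ‖u‖ ^ (-q) • (u - v) + (‖u‖ ^ (-q) - ‖v‖ ^ (-q)) • v := by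
    rw [rieszKernel_eq_rpow_neg_smul, rieszKernel_eq_rpow_neg_smul, smul_sub, sub_smul]
    abel
  have hhalf : (‖v‖ / 2) ^ (-q) = 2 ^ q * ‖v‖ ^ (-q) := by
    rw [Real.div_rpow (norm_nonneg v) zero_le_two, Real.rpow_neg zero_le_two, div_inv_eq_mul,
      mul_comm]
  calc ‖rieszKernel s u - rieszKernel s v‖
      ≤ ‖u‖ ^ (-q) * ‖u - v‖ + |‖u‖ ^ (-q) - ‖v‖ ^ (-q)| * ‖v‖ := by
        rw [hdecomp]
        refine (norm_add_le _ _).trans_eq ?_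
        rw [norm_smul, norm_smul, Real.norm_of_nonneg (Real.rpow_nonneg (norm_nonneg u) _),
          Real.norm_eq_abs]
    _ ≤ (‖v‖ / 2) ^ (-q) * ‖u - v‖ + q * (‖v‖ / 2) ^ (-q - 1) * ‖u - v‖ * ‖v‖ := by
        have hnear : ‖u‖ ^ (-q) ≤ (‖v‖ / 2) ^ (-q) :=
          Real.rpow_le_rpow_of_nonpos hB hA (neg_nonpos.2 hq)
        have hdiff : |‖u‖ ^ (-q) - ‖v‖ ^ (-q)| ≤ q * (‖v‖ / 2) ^ (-q - 1) * ‖u - v‖ :=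
          (abs_rpow_neg_sub_rpow_neg_le hq hB hA (by linarith)).trans
            (mul_le_mul_of_nonneg_left hAB (by positivity))
        gcongr
    _ = 2 ^ (s + 1) * (2 * s + 3) * ‖u - v‖ * ‖v‖ ^ (-(s + 1)) := by
        rw [Real.rpow_sub_one hB.ne', hhalf]
        field_simp
        ring

end Kernel

theorem tsum_ofReal_mul_half_pow (c : ℝ) :
    ∑' k : ℕ, ENNReal.ofReal (c * (1 / 2) ^ k) = ENNReal.ofReal (2 * c) := by
  have hhalf : ENNReal.ofReal (1 / 2) = 2⁻¹ := by
    rw [one_div, ENNReal.ofReal_inv_of_pos two_pos, ENNReal.ofReal_ofNat]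
  simp_rw [ENNReal.ofReal_mul' (pow_nonneg (one_div_nonneg.2 zero_le_two) _),
    ENNReal.ofReal_pow (one_div_nonneg.2 zero_le_two), hhalf]
  rw [ENNReal.tsum_mul_left, ENNReal.tsum_geometric, ENNReal.one_sub_inv_two, inv_inv,
    ENNReal.ofReal_mul zero_le_two, ENNReal.ofReal_ofNat, mul_comm]

theorem setLIntegral_rpow_neg_dist_le {α : Type*} [PseudoMetricSpace α] [MeasurableSpace α]
    {ν : Measure α} {x₀ : α} {s M ε : ℝ} (hs : -1 ≤ s) (hε : 0 < ε)
    (hgrowth : ∀ r, 0 < r → ν (ball x₀ r) ≤ ENNReal.ofReal (M * r ^ s)) :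
    ∫⁻ y in {y | ε < dist y x₀}, ENNReal.ofReal (dist y x₀ ^ (-(s + 1))) ∂ν ≤
      ENNReal.ofReal (2 ^ (s + 1) * M / ε) := by
  set shell : ℕ → Set α := fun k => {y | 2 ^ k * ε ≤ dist y x₀ ∧ dist y x₀ < 2 ^ (k + 1) * ε}
  have hcover : {y | ε < dist y x₀} ⊆ ⋃ k, shell k := by
    intro y hy
    obtain ⟨k, hk⟩ := exists_nat_pow_near ((one_le_div hε).2 (le_of_lt hy)) one_lt_two
    exact mem_iUnion.2 ⟨k, by rwa [le_div_iff₀ hε, div_lt_iff₀ hε] at hk⟩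
  have hshell : ∀ k, ∫⁻ y in shell k, ENNReal.ofReal (dist y x₀ ^ (-(s + 1))) ∂ν ≤
      ENNReal.ofReal (2 ^ s * M / ε * (1 / 2) ^ k) := by
    intro k
    set t : ℝ := 2 ^ k * ε with ht_def
    have ht : 0 < t := by positivity
    calc ∫⁻ y in shell k, ENNReal.ofReal (dist y x₀ ^ (-(s + 1))) ∂ν
        ≤ ∫⁻ _ in shell k, ENNReal.ofReal (t ^ (-(s + 1))) ∂ν :=
          setLIntegral_mono measurable_const fun y hy =>
            ENNReal.ofReal_le_ofReal (Real.rpow_le_rpow_of_nonpos ht hy.1 (by linarith))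
      _ = ENNReal.ofReal (t ^ (-(s + 1))) * ν (shell k) := setLIntegral_const _ _
      _ ≤ ENNReal.ofReal (t ^ (-(s + 1))) * ENNReal.ofReal (M * (2 * t) ^ s) := by
          refine mul_le_mul_right ((measure_mono fun y hy => ?_).trans
            (hgrowth _ (by positivity))) _
          rw [mem_ball, ht_def, ← mul_assoc, ← pow_succ']
          exact hy.2
      _ = ENNReal.ofReal (2 ^ s * M / ε * (1 / 2) ^ k) := by
          rw [← ENNReal.ofReal_mul (by positivity), Real.mul_rpow zero_le_two ht.le,
            Real.rpow_neg ht.le, Real.rpow_add_one ht.ne']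
          have hts : 0 < t ^ s := by positivity
          congr 1
          field_simp
          rw [ht_def, one_div, inv_pow]
          field_simp
  calc ∫⁻ y in {y | ε < dist y x₀}, ENNReal.ofReal (dist y x₀ ^ (-(s + 1))) ∂ν
      ≤ ∫⁻ y in ⋃ k, shell k, ENNReal.ofReal (dist y x₀ ^ (-(s + 1))) ∂ν :=
        lintegral_mono_set hcover
    _ ≤ ∑' k, ∫⁻ y in shell k, ENNReal.ofReal (dist y x₀ ^ (-(s + 1))) ∂ν :=
        lintegral_iUnion_le _ _
    _ ≤ ∑' k, ENNReal.ofReal (2 ^ s * M / ε * (1 / 2) ^ k) := ENNReal.tsum_le_tsum hshell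
    _ = ENNReal.ofReal (2 ^ (s + 1) * M / ε) := by
        rw [tsum_ofReal_mul_half_pow, Real.rpow_add_one two_ne_zero]
        ring_nf

section Riesz

variable {d : ℕ} {s M δ ε : ℝ} {ν : Measure (EuclideanSpace ℝ (Fin d))}
  {x x₀ : EuclideanSpace ℝ (Fin d)}

theorem rieszT_eq_setIntegral_rieszKernel :
    rieszT d s ν ε x = ∫ y in {y | ε < dist y x}, rieszKernel s (y - x) ∂ν := rfl

theorem measurableSet_lt_dist (ε : ℝ) (x : EuclideanSpace ℝ (Fin d)) :
    MeasurableSet {y | ε < dist y x} :=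
  measurableSet_lt measurable_const (measurable_id.dist measurable_const)

theorem measurable_rieszKernel_sub (s : ℝ) (x : EuclideanSpace ℝ (Fin d)) :
    Measurable fun y => rieszKernel s (y - x) := by
  unfold rieszKernel
  fun_prop

theorem integrableOn_rieszKernel_sub [IsFiniteMeasure ν] (hs : 0 ≤ s) (hε : 0 < ε) :
    IntegrableOn (fun y => rieszKernel s (y - x)) {y | ε < dist y x} ν :=
  Measure.integrableOn_of_bounded (M := ε ^ (-s)) (measure_ne_top _ _)
    (measurable_rieszKernel_sub s x).aestronglyMeasurable
    ((ae_restrict_iff' (measurableSet_lt_dist ε x)).2 (ae_of_all _ fun y hy =>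
      norm_rieszKernel_le hs hε (by rw [← dist_eq_norm]; exact le_of_lt hy)))

theorem rieszT_sub_rieszT [IsFiniteMeasure ν] (hs : 0 ≤ s) (hδ : 0 < δ)
    (hδε : δ + dist x x₀ ≤ ε) :
    rieszT d s ν δ x - rieszT d s ν ε x₀ =
      (∫ y in {y | ε < dist y x₀}, (rieszKernel s (y - x) - rieszKernel s (y - x₀)) ∂ν) +
        ∫ y in {y | δ < dist y x} \ {y | ε < dist y x₀}, rieszKernel s (y - x) ∂ν := by
  have hsub : {y | ε < dist y x₀} ⊆ {y | δ < dist y x} := fun y (hy : ε < dist y x₀) =>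
    show δ < dist y x by linarith [dist_triangle y x x₀]
  have hnear := integrableOn_rieszKernel_sub (ν := ν) (x := x) hs hδ
  have hfar := integrableOn_rieszKernel_sub (ν := ν) (x := x₀) hs
    (hδ.trans_le (by linarith [dist_nonneg (x := x) (y := x₀)]))
  rw [rieszT_eq_setIntegral_rieszKernel, rieszT_eq_setIntegral_rieszKernel,
    integral_sub (hnear.mono_set hsub) hfar,
    setIntegral_sdiff (measurableSet_lt_dist ε x₀) hnear hsub]
  abel

theorem norm_setIntegral_rieszKernel_sdiff_le [IsFiniteMeasure ν] (hs : 0 ≤ s) (hδ : 0 < δ) :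
    ‖∫ y in {y | δ < dist y x} \ {y | ε < dist y x₀}, rieszKernel s (y - x) ∂ν‖ ≤
      δ ^ (-s) * (ν (closedBall x₀ ε)).toReal := by
  refine (norm_setIntegral_le_of_norm_le_const (measure_lt_top ν _) fun y hy =>
    norm_rieszKernel_le hs hδ (by rw [← dist_eq_norm]; exact le_of_lt hy.1)).trans ?_
  refine mul_le_mul_of_nonneg_left (ENNReal.toReal_mono (measure_ne_top ν _)
    (measure_mono fun y hy => ?_)) (by positivity)
  exact mem_closedBall.2 (not_lt.1 hy.2)

theorem norm_setIntegral_rieszKernel_sub_le (hs : -1 ≤ s) (hε : 0 < ε) (hM : 0 ≤ M)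
    (hgrowth : ∀ r, 0 < r → ν (ball x₀ r) ≤ ENNReal.ofReal (M * r ^ s))
    (hx : dist x x₀ ≤ ε / 2) :
    ‖∫ y in {y | ε < dist y x₀}, (rieszKernel s (y - x) - rieszKernel s (y - x₀)) ∂ν‖ ≤
      4 ^ (s + 1) * (2 * s + 3) * dist x x₀ * M / ε := by
  have hs' : 0 ≤ 2 * s + 3 := by linarith
  set C := 2 ^ (s + 1) * (2 * s + 3) * dist x x₀ with hC_def
  have hC : 0 ≤ C := by positivity
  have hpt : ∀ y ∈ {y | ε < dist y x₀},
      ENNReal.ofReal ‖rieszKernel s (y - x) - rieszKernel s (y - x₀)‖ ≤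
        ENNReal.ofReal C * ENNReal.ofReal (dist y x₀ ^ (-(s + 1))) := by
    intro y (hy : ε < dist y x₀)
    have hdiff : (y - x) - (y - x₀) = x₀ - x := by abel
    rw [← ENNReal.ofReal_mul hC]
    refine ENNReal.ofReal_le_ofReal ((norm_rieszKernel_sub_le hs ?_ ?_).trans_eq ?_)
    · exact sub_ne_zero.2 (dist_pos.1 (hε.trans hy))
    · rw [hdiff, ← dist_eq_norm, ← dist_eq_norm, dist_comm]; linarith
    · rw [hdiff, ← dist_eq_norm, ← dist_eq_norm, dist_comm x₀ x]
  refine (norm_integral_le_lintegral_norm _).trans (ENNReal.toReal_le_of_le_ofReal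
    (by positivity) ?_)
  calc ∫⁻ y in {y | ε < dist y x₀},
        ENNReal.ofReal ‖rieszKernel s (y - x) - rieszKernel s (y - x₀)‖ ∂ν
      ≤ ∫⁻ y in {y | ε < dist y x₀},
          ENNReal.ofReal C * ENNReal.ofReal (dist y x₀ ^ (-(s + 1))) ∂ν :=
        setLIntegral_mono' (measurableSet_lt_dist ε x₀) hpt
    _ = ENNReal.ofReal C *
          ∫⁻ y in {y | ε < dist y x₀}, ENNReal.ofReal (dist y x₀ ^ (-(s + 1))) ∂ν :=
        lintegral_const_mul' _ _ ENNReal.ofReal_ne_top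
    _ ≤ ENNReal.ofReal C * ENNReal.ofReal (2 ^ (s + 1) * M / ε) := by
        gcongr
        exact setLIntegral_rpow_neg_dist_le hs hε hgrowth
    _ = ENNReal.ofReal (4 ^ (s + 1) * (2 * s + 3) * dist x x₀ * M / ε) := by
        rw [← ENNReal.ofReal_mul hC, show (4 : ℝ) = 2 * 2 by norm_num,
          Real.mul_rpow zero_le_two zero_le_two, hC_def]
        ring_nf

theorem norm_rieszT_sub_rieszT_le [IsFiniteMeasure ν] (hs : 0 ≤ s) (hM : 0 ≤ M) (hε : 0 < ε)
    (hgrowth : ∀ r, 0 < r → ν (ball x₀ r) ≤ ENNReal.ofReal (M * r ^ s))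
    (hx : dist x x₀ ≤ ε / 2) :
    ‖rieszT d s ν (ε - dist x x₀) x - rieszT d s ν ε x₀‖ ≤ 4 ^ s * (4 * s + 7) * M := by
  have hδ : ε / 2 ≤ ε - dist x x₀ := by linarith
  rw [rieszT_sub_rieszT hs (by linarith) (by linarith)]
  have hfar := norm_setIntegral_rieszKernel_sub_le (by linarith) hε hM hgrowth hx
  have hnear := norm_setIntegral_rieszKernel_sdiff_le (ν := ν) (x := x) (x₀ := x₀) (ε := ε) hs
    (show 0 < ε - dist x x₀ by linarith)
  have hball : (ν (closedBall x₀ ε)).toReal ≤ M * (2 * ε) ^ s :=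
    ENNReal.toReal_le_of_le_ofReal (by positivity)
      ((measure_mono (closedBall_subset_ball (by linarith))).trans (hgrowth _ (by positivity)))
  have hkernel : (ε - dist x x₀) ^ (-s) ≤ (ε / 2) ^ (-s) :=
    Real.rpow_le_rpow_of_nonpos (by positivity) hδ (by linarith)
  have hscale : (ε / 2) ^ (-s) * (2 * ε) ^ s = 4 ^ s := by
    rw [Real.rpow_neg (by positivity), inv_mul_eq_div, ← Real.div_rpow (by positivity)
      (by positivity)]
    congr 1
    field_simp
    norm_num
  calc _ ≤ 4 ^ (s + 1) * (2 * s + 3) * dist x x₀ * M / ε +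
        (ε - dist x x₀) ^ (-s) * (ν (closedBall x₀ ε)).toReal :=
        (norm_add_le _ _).trans (add_le_add hfar hnear)
    _ ≤ 4 ^ (s + 1) * (2 * s + 3) * (ε / 2) * M / ε + (ε / 2) ^ (-s) * (M * (2 * ε) ^ s) := by
        gcongr
    _ = 4 ^ s * (4 * s + 7) * M := by
        rw [mul_left_comm, hscale, Real.rpow_add_one (by norm_num)]
        field_simp
        ring

end Riesz

theorem stmt10_general (d : ℕ) (s : ℝ) (hs : 0 < s) :
    ∃ C₀ : ℝ, 0 < C₀ ∧ ∀ C₂ : ℝ, C₀ ≤ C₂ → 10 * 2 ^ s < C₂ →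
      ∀ ν : Measure (EuclideanSpace ℝ (Fin d)), IsFiniteMeasure ν →
      ∀ (P t₁ ε : ℝ) (x₀ : EuclideanSpace ℝ (Fin d)), 0 < P → 0 < t₁ →
        (∀ r : ℝ, 0 < r → (ν (Metric.ball x₀ r)).toReal < P * r ^ s / C₂) →
        ν (Metric.ball x₀ t₁) = 0 →
        0.9 * t₁ < ε →
        P < ‖rieszT d s ν ε x₀‖ →
        ∀ x : EuclideanSpace ℝ (Fin d), dist x x₀ < 0.4 * t₁ →
          ∃ δ : ℝ, 0 < δ ∧ 0.8 * P < ‖rieszT d s ν δ x‖ := by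
  refine ⟨5 * (4 ^ s * (4 * s + 7)), by positivity, ?_⟩
  intro C₂ hC₂ _ ν _ P t₁ ε x₀ hP ht₁ hgrowth _ hε hR x hx
  have hC₂pos : 0 < C₂ := lt_of_lt_of_le (by positivity) hC₂
  have hgrowth' : ∀ r, 0 < r → ν (ball x₀ r) ≤ ENNReal.ofReal (P / C₂ * r ^ s) := fun r hr =>
    (ENNReal.le_ofReal_iff_toReal_le (measure_ne_top ν _) (by positivity)).2
      ((hgrowth r hr).le.trans_eq (div_mul_eq_mul_div P C₂ (r ^ s)).symm)
  have hclose := norm_rieszT_sub_rieszT_le hs.le (by positivity) (by linarith) hgrowth'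
    (show dist x x₀ ≤ ε / 2 by linarith)
  have hsmall : 4 ^ s * (4 * s + 7) * (P / C₂) ≤ P / 5 := by
    rw [mul_div_assoc', div_le_div_iff₀ hC₂pos (by norm_num)]
    nlinarith
  refine ⟨ε - dist x x₀, by linarith, ?_⟩
  have htriangle := norm_sub_norm_le (rieszT d s ν ε x₀) (rieszT d s ν (ε - dist x x₀) x)
  rw [norm_sub_rev] at htriangle
  linarith

/-- If `ν(B(x₀,r)) < C₂⁻¹ P r^s` for all `r>0`, `ν(B(x₀,t₁)) = 0`, and
`|R_{ν,ε}(x₀)| > P` for some `ε > 0.9 t₁`, then for `C₂` large enough (depending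
only on `s`), every `x` with `|x−x₀| < 0.4 t₁` satisfies `sup_δ |R_{ν,δ}(x)| > 0.8P`. -/
theorem stmt10 (d : ℕ) (s : ℝ) (hs : 0 < s) (hsd : s < d) :
    ∃ C₀ : ℝ, 0 < C₀ ∧ ∀ C₂ : ℝ, C₀ ≤ C₂ → 10 * 2 ^ s < C₂ →
      ∀ ν : Measure (EuclideanSpace ℝ (Fin d)), IsFiniteMeasure ν →
      ∀ (P t₁ ε : ℝ) (x₀ : EuclideanSpace ℝ (Fin d)), 0 < P → 0 < t₁ →
        (∀ r : ℝ, 0 < r → (ν (Metric.ball x₀ r)).toReal < P * r ^ s / C₂) →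
        ν (Metric.ball x₀ t₁) = 0 →
        0.9 * t₁ < ε →
        P < ‖rieszT d s ν ε x₀‖ →
        ∀ x : EuclideanSpace ℝ (Fin d), dist x x₀ < 0.4 * t₁ →
          ∃ δ : ℝ, 0 < δ ∧ 0.8 * P < ‖rieszT d s ν δ x‖ :=
  stmt10_general d s hs
end

section
/- Let d ≥ 1, s > 0, let ν be a positive finite measure supported in the cube Q of edge length ℓ centered at the origin, let x ∈ [5ℓ/4, 11ℓ/4]^d, and let v be a random vector uniformly distributed over the cube of edge length ℓ/2 centered at the origin. Then the random variable ξ = R^s_ν(x+v) = ∫ (x+v−y)/|x+v−y|^{s+1} dν(y) satisfies |ξ| ≤ C·θ and Var ξ ≥ c·θ², where θ = ‖ν‖/ℓ^s and C, c > 0 depend only on d and s. -/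
/-!
For `v` in the cube `V = [-ℓ/4, ℓ/4]^d` and `y` in `Q`, every coordinate of `t = x + v - y` lies
in `[ℓ/2, 7ℓ/2]`, so `‖t‖ ≥ ℓ/2` and the kernel `t / ‖t‖^(s+1)` has norm at most `(2/ℓ)^s`;
this gives `‖ξ‖ ≤ 2^s θ`.

For the variance, fix coordinates `i ≠ k` (or `i = k` when `d = 1`). The `i`-th component of the
kernel is `(t i / ‖t‖) * ‖t‖^(-s)`. Moving `t` by `ℓ/4` in direction `k` does not increase the
direction cosine `t i / ‖t‖` and multiplies `‖t‖` by at least some `ρ(d) > 1`, so this component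
drops by a fixed fraction of itself, i.e. by at least `a / ℓ^s`. Integrating against `ν`, `ξ i`
drops by at least `a θ` from `v` to `v + (ℓ/4) e_k`. The lower half `{v k < 0}` of `V` and its
translate are disjoint subsets of `V`, and on each such pair `(ξ i - m)^2` sums to at least
`(a θ)^2 / 2`, so `E ‖ξ - m‖^2 ≥ E (ξ i - m)^2 ≥ (a θ)^2 / 4`.
-/

open MeasureTheory Set

namespace RieszTransform

section General

variable {E : Type*} [NormedAddCommGroup E] [NormedSpace ℝ E]

noncomputable def rieszKernel (s : ℝ) (t : E) : E := (‖t‖ ^ (s + 1))⁻¹ • t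

lemma norm_rieszKernel (s : ℝ) {t : E} (ht : t ≠ 0) : ‖rieszKernel s t‖ = ‖t‖ ^ (-s) := by
  have ht' : 0 < ‖t‖ := norm_pos_iff.mpr ht
  rw [rieszKernel, norm_smul, norm_inv, Real.norm_of_nonneg (by positivity),
    Real.rpow_add ht', Real.rpow_one, Real.rpow_neg ht'.le]
  field_simp

lemma norm_rieszKernel_le {s r : ℝ} (hs : 0 ≤ s) (hr : 0 < r) {t : E} (ht : r ≤ ‖t‖) :
    ‖rieszKernel s t‖ ≤ r ^ (-s) := by
  rw [norm_rieszKernel s (norm_pos_iff.mp (hr.trans_le ht))]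
  exact Real.rpow_le_rpow_of_nonpos hr ht (neg_nonpos.mpr hs)

variable [MeasurableSpace E]

noncomputable def rieszTransform (s : ℝ) (ν : Measure E) (w : E) : E :=
  ∫ y, rieszKernel s (w - y) ∂ν

lemma norm_rieszTransform_le {s r : ℝ} (hs : 0 ≤ s) (hr : 0 < r) {ν : Measure E}
    [IsFiniteMeasure ν] {w : E} (hw : ∀ᵐ y ∂ν, r ≤ ‖w - y‖) :
    ‖rieszTransform s ν w‖ ≤ r ^ (-s) * ν.real univ :=
  norm_integral_le_of_norm_le_const (hw.mono fun _ hy => norm_rieszKernel_le hs hr hy)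

variable [BorelSpace E] [SecondCountableTopology E]

lemma measurable_rieszKernel (s : ℝ) : Measurable (rieszKernel s : E → E) := by
  unfold rieszKernel; fun_prop

lemma integrable_rieszKernel_sub {s r : ℝ} (hs : 0 ≤ s) (hr : 0 < r) {ν : Measure E}
    [IsFiniteMeasure ν] {w : E} (hw : ∀ᵐ y ∂ν, r ≤ ‖w - y‖) :
    Integrable (fun y => rieszKernel s (w - y)) ν :=
  .of_bound
    ((measurable_rieszKernel s).comp (measurable_const.sub measurable_id)).aestronglyMeasurable _
    (hw.mono fun _ hy => norm_rieszKernel_le hs hr hy)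

lemma measurable_rieszTransform (s : ℝ) (ν : Measure E) [SFinite ν] :
    Measurable (rieszTransform s ν) :=
  (((measurable_rieszKernel s).comp measurable_sub).stronglyMeasurable.integral_prod_right'
    (f := fun p : E × E => rieszKernel s (p.1 - p.2))).measurable

end General

section Coordinates

variable {ι : Type*}

lemma add_smul_single_apply [DecidableEq ι] (t : EuclideanSpace ℝ ι) (h : ℝ) (k j : ι) :
    (t + h • EuclideanSpace.single k (1 : ℝ)) j = t j + if j = k then h else 0 := by
  simp [PiLp.single_apply]

lemma abs_add_smul_single_apply_le [DecidableEq ι] {r : ℝ} {v : EuclideanSpace ℝ ι} {k : ι}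
    (hv : ∀ j, |v j| ≤ r) (hvk : v k < 0) (j : ι) :
    |(v + r • EuclideanSpace.single k (1 : ℝ)) j| ≤ r := by
  rw [add_smul_single_apply]
  split_ifs with hjk
  · subst hjk
    have := abs_le.mp (hv j)
    exact abs_le.mpr ⟨by linarith, by linarith⟩
  · rw [add_zero]; exact hv j

variable [Fintype ι]

lemma rieszKernel_apply (s : ℝ) (t : EuclideanSpace ℝ ι) (i : ι) :
    rieszKernel s t i = (‖t‖ ^ (s + 1))⁻¹ * t i := rfl

lemma le_norm_of_le_apply {t : EuclideanSpace ℝ ι} {i : ι} {r : ℝ} (h : r ≤ t i) : r ≤ ‖t‖ :=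
  h.trans ((le_abs_self _).trans (PiLp.norm_apply_le t i))

lemma rieszKernel_apply_eq_div_mul_rpow (s : ℝ) {t : EuclideanSpace ℝ ι} (ht : 0 < ‖t‖) (i : ι) :
    rieszKernel s t i = t i / ‖t‖ * ‖t‖ ^ (-s) := by
  rw [rieszKernel_apply, Real.rpow_add ht, Real.rpow_one, Real.rpow_neg ht.le]
  field_simp

lemma norm_le_sqrt_card_mul {t : EuclideanSpace ℝ ι} {M : ℝ} (hM : 0 ≤ M) (ht : ∀ i, |t i| ≤ M) :
    ‖t‖ ≤ √(Fintype.card ι) * M := by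
  have hsq : ‖t‖ ^ 2 ≤ Fintype.card ι * M ^ 2 := by
    rw [EuclideanSpace.real_norm_sq_eq, ← nsmul_eq_mul, ← Finset.card_univ, ← Finset.sum_const]
    exact Finset.sum_le_sum fun i _ => sq_le_sq' (abs_le.mp (ht i)).1 (abs_le.mp (ht i)).2
  rw [← Real.sqrt_sq (norm_nonneg t), ← Real.sqrt_sq hM, ← Real.sqrt_mul (by positivity)]
  exact Real.sqrt_le_sqrt hsq

lemma norm_eq_abs_apply [Subsingleton ι] (t : EuclideanSpace ℝ ι) (i : ι) : ‖t‖ = |t i| := by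
  rw [EuclideanSpace.norm_eq, Fintype.sum_subsingleton _ i, Real.norm_eq_abs, sq_abs,
    Real.sqrt_sq_eq_abs]

lemma rieszKernel_apply_le_rpow_mul {s ρ : ℝ} (hs : 0 ≤ s) (hρ : 0 < ρ) {t t' : EuclideanSpace ℝ ι}
    {i : ι} (hti : 0 ≤ t i) (ht : 0 < ‖t‖) (hcos : t' i * ‖t‖ ≤ t i * ‖t'‖)
    (hgrow : ρ * ‖t‖ ≤ ‖t'‖) :
    rieszKernel s t' i ≤ ρ ^ (-s) * rieszKernel s t i := by
  have ht' : 0 < ‖t'‖ := (mul_pos hρ ht).trans_le hgrow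
  rw [rieszKernel_apply_eq_div_mul_rpow s ht', rieszKernel_apply_eq_div_mul_rpow s ht]
  calc t' i / ‖t'‖ * ‖t'‖ ^ (-s) ≤ t i / ‖t‖ * (ρ * ‖t‖) ^ (-s) := by
        gcongr ?_ * ?_
        · exact (div_le_div_iff₀ ht' ht).mpr hcos
        · exact Real.rpow_le_rpow_of_nonpos (by positivity) hgrow (neg_nonpos.mpr hs)
    _ = ρ ^ (-s) * (t i / ‖t‖ * ‖t‖ ^ (-s)) := by
        rw [Real.mul_rpow hρ.le ht.le]; ring

lemma div_rpow_le_rieszKernel_apply {s r R : ℝ} (hs : -1 ≤ s) (hr : 0 < r) {t : EuclideanSpace ℝ ι}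
    {i : ι} (hti : r ≤ t i) (ht : ‖t‖ ≤ R) :
    r / R ^ (s + 1) ≤ rieszKernel s t i := by
  have ht0 : 0 < ‖t‖ := hr.trans_le (le_norm_of_le_apply hti)
  rw [rieszKernel_apply, inv_mul_eq_div]
  exact div_le_div₀ (hr.le.trans hti) hti (Real.rpow_pos_of_pos ht0 _)
    (Real.rpow_le_rpow ht0.le ht (by linarith))

variable [DecidableEq ι]

lemma norm_add_smul_single_sq (t : EuclideanSpace ℝ ι) (h : ℝ) (k : ι) :
    ‖t + h • EuclideanSpace.single k (1 : ℝ)‖ ^ 2 = ‖t‖ ^ 2 + h * (2 * t k + h) := by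
  rw [norm_add_sq_real, inner_smul_right, EuclideanSpace.inner_single_right, norm_smul,
    PiLp.norm_single]
  simp only [Real.ringHom_apply, one_mul, Real.norm_eq_abs, norm_one, mul_one, sq_abs]
  ring

lemma sqrt_one_add_sq_mul_norm_le {t : EuclideanSpace ℝ ι} {h R : ℝ} {k : ι} (hh : 0 ≤ h)
    (htk : 0 ≤ t k) (hR : 0 < R) (ht : ‖t‖ ≤ R) :
    √(1 + (h / R) ^ 2) * ‖t‖ ≤ ‖t + h • EuclideanSpace.single k (1 : ℝ)‖ := by
  have hsq : (1 + (h / R) ^ 2) * ‖t‖ ^ 2 ≤ ‖t + h • EuclideanSpace.single k (1 : ℝ)‖ ^ 2 := by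
    have : (h / R) ^ 2 * ‖t‖ ^ 2 ≤ h ^ 2 := by
      rw [div_pow, div_mul_eq_mul_div, div_le_iff₀ (by positivity)]
      gcongr
    rw [norm_add_smul_single_sq]
    nlinarith
  refine le_of_pow_le_pow_left₀ two_ne_zero (norm_nonneg _) ?_
  rwa [mul_pow, Real.sq_sqrt (by positivity)]

lemma apply_add_smul_single_mul_norm_le {t : EuclideanSpace ℝ ι} {h : ℝ} {i k : ι}
    (hik : i ≠ k ∨ Subsingleton ι) (hh : 0 ≤ h) (hti : 0 ≤ t i) (htk : 0 ≤ t k) :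
    (t + h • EuclideanSpace.single k (1 : ℝ)) i * ‖t‖ ≤
      t i * ‖t + h • EuclideanSpace.single k (1 : ℝ)‖ := by
  rw [add_smul_single_apply]
  rcases hik with hik | _
  · have hnorm : ‖t‖ ≤ ‖t + h • EuclideanSpace.single k (1 : ℝ)‖ := by
      refine le_of_pow_le_pow_left₀ two_ne_zero (norm_nonneg _) ?_
      rw [norm_add_smul_single_sq]
      nlinarith
    rw [if_neg hik, add_zero]
    exact mul_le_mul_of_nonneg_left hnorm hti
  · obtain rfl := Subsingleton.elim k i
    rw [norm_eq_abs_apply t k, norm_eq_abs_apply (t + h • EuclideanSpace.single k (1 : ℝ)) k,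
      add_smul_single_apply, if_pos rfl, abs_of_nonneg htk, abs_of_nonneg (by positivity),
      mul_comm]

theorem exists_pos_le_rieszKernel_apply_sub {s : ℝ} (hs : 0 < s) {i k : ι}
    (hik : i ≠ k ∨ Subsingleton ι) :
    ∃ a > 0, ∀ ℓ > 0, ∀ t : EuclideanSpace ℝ ι, (∀ j, ℓ / 2 ≤ t j ∧ t j ≤ 7 * ℓ / 2) →
      a / ℓ ^ s ≤
        rieszKernel s t i - rieszKernel s (t + (ℓ / 4) • EuclideanSpace.single k (1 : ℝ)) i := by
  have : Nonempty ι := ⟨i⟩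
  set B : ℝ := √(Fintype.card ι) * (7 / 2)
  have hB : 0 < B := by positivity
  set ρ : ℝ := √(1 + (1 / (4 * B)) ^ 2)
  have hρ : 1 < ρ := Real.lt_sqrt_of_sq_lt (by rw [one_pow, lt_add_iff_pos_right]; positivity)
  have hρs : ρ ^ (-s) < 1 := Real.rpow_lt_one_of_one_lt_of_neg hρ (neg_lt_zero.mpr hs)
  refine ⟨(1 - ρ ^ (-s)) / (2 * B ^ (s + 1)), div_pos (by linarith) (by positivity), ?_⟩
  intro ℓ hℓ t ht
  have hti : ℓ / 2 ≤ t i := (ht i).1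
  have htk : 0 ≤ t k := by linarith [(ht k).1]
  have hnorm : ‖t‖ ≤ B * ℓ := by
    refine (norm_le_sqrt_card_mul (M := 7 * ℓ / 2) (by positivity) fun j => ?_).trans_eq (by ring)
    exact abs_le.mpr ⟨by linarith [(ht j).1], (ht j).2⟩
  have hpos : 0 < ‖t‖ := (half_pos hℓ).trans_le (le_norm_of_le_apply hti)
  have hgrow : ρ * ‖t‖ ≤ ‖t + (ℓ / 4) • EuclideanSpace.single k (1 : ℝ)‖ := by
    have h := sqrt_one_add_sq_mul_norm_le (h := ℓ / 4) (by positivity) htk (by positivity) hnorm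
    rwa [show ℓ / 4 / (B * ℓ) = 1 / (4 * B) by field_simp] at h
  have hcos := apply_add_smul_single_mul_norm_le (h := ℓ / 4) hik (by positivity) (by linarith) htk
  have hdecay :=
    rieszKernel_apply_le_rpow_mul (ρ := ρ) hs.le (by positivity) (by linarith) hpos hcos hgrow
  have hlow := div_rpow_le_rieszKernel_apply (s := s) (by linarith) (by positivity) hti hnorm
  calc (1 - ρ ^ (-s)) / (2 * B ^ (s + 1)) / ℓ ^ s
      = (1 - ρ ^ (-s)) * (ℓ / 2 / (B * ℓ) ^ (s + 1)) := by
        rw [Real.mul_rpow hB.le hℓ.le, Real.rpow_add_one hℓ.ne']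
        field_simp
    _ ≤ (1 - ρ ^ (-s)) * rieszKernel s t i := by gcongr
    _ ≤ _ := by linarith

end Coordinates

section Shift

variable {G : Type*} [MeasurableSpace G] [AddGroup G] [MeasurableAdd G] {μ : Measure G}
  [μ.IsAddRightInvariant]

lemma setIntegral_add_comp_add_right_le {g : G → ℝ} {V A : Set G} {u : G} (hg : ∀ v, 0 ≤ g v)
    (hgV : IntegrableOn g V μ) (hA : MeasurableSet A) (hAV : A ⊆ V) (hAuV : ∀ v ∈ A, v + u ∈ V)
    (hdisj : ∀ v ∈ A, v + u ∉ A) :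
    ∫ v in A, (g v + g (v + u)) ∂μ ≤ ∫ v in V, g v ∂μ := by
  have hpres := measurePreserving_add_right μ u
  have hemb := (MeasurableEquiv.addRight u).measurableEmbedding
  have hA'V : (· + u) '' A ⊆ V := by rintro _ ⟨v, hv, rfl⟩; exact hAuV v hv
  have hdisj' : Disjoint A ((· + u) '' A) := by
    rw [disjoint_right]; rintro _ ⟨v, hv, rfl⟩; exact hdisj v hv
  have hgA' : IntegrableOn (fun v => g (v + u)) A μ :=
    (hpres.integrableOn_image hemb).mp (hgV.mono_set hA'V)
  calc ∫ v in A, (g v + g (v + u)) ∂μ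
      = ∫ v in A, g v ∂μ + ∫ v in (· + u) '' A, g v ∂μ := by
        rw [integral_add (hgV.mono_set hAV) hgA', hpres.setIntegral_image_emb hemb]
    _ = ∫ v in A ∪ (· + u) '' A, g v ∂μ :=
        (setIntegral_union hdisj' (hemb.measurableSet_image' hA) (hgV.mono_set hAV)
          (hgV.mono_set hA'V)).symm
    _ ≤ ∫ v in V, g v ∂μ :=
        setIntegral_mono_set hgV (ae_of_all _ hg) (union_subset hAV hA'V).eventuallyLE

lemma mul_measureReal_le_setIntegral_sq_sub {f : G → ℝ} {V A : Set G} {u : G} {c δ : ℝ}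
    (hδ : 0 ≤ δ) (hfV : IntegrableOn (fun v => (f v - c) ^ 2) V μ) (hA : MeasurableSet A)
    (hAfin : μ A ≠ ⊤) (hAV : A ⊆ V) (hAuV : ∀ v ∈ A, v + u ∈ V) (hdisj : ∀ v ∈ A, v + u ∉ A)
    (hgap : ∀ v ∈ A, δ ≤ f v - f (v + u)) :
    δ ^ 2 / 2 * μ.real A ≤ ∫ v in V, (f v - c) ^ 2 ∂μ := by
  have hfA' : IntegrableOn (fun v => (f (v + u) - c) ^ 2) A μ :=
    ((measurePreserving_add_right μ u).integrableOn_image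
      (MeasurableEquiv.addRight u).measurableEmbedding).mp
      (hfV.mono_set (by rintro _ ⟨v, hv, rfl⟩; exact hAuV v hv))
  refine le_trans ?_ (setIntegral_add_comp_add_right_le (fun v => sq_nonneg (f v - c)) hfV hA hAV
    hAuV hdisj)
  refine setIntegral_ge_of_const_le_real hA hAfin (fun v hv => ?_) ((hfV.mono_set hAV).add hfA')
  nlinarith [hgap v hv, sq_nonneg (f v + f (v + u) - 2 * c)]

end Shift

section Cube

variable {ι : Type*} [Fintype ι]

lemma volume_setOf_forall_apply_mem (S : ι → Set ℝ) (hS : ∀ i, MeasurableSet (S i)) :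
    volume {v : EuclideanSpace ℝ ι | ∀ i, v i ∈ S i} = ∏ i, volume (S i) := by
  have h : {v : EuclideanSpace ℝ ι | ∀ i, v i ∈ S i} =
      (MeasurableEquiv.toLp 2 (ι → ℝ)).symm ⁻¹' univ.pi S := by
    ext v; simp [MeasurableEquiv.coe_toLp_symm, mem_pi]
  rw [h, (EuclideanSpace.volume_preserving_symm_measurableEquiv_toLp ι).measure_preimage
    (MeasurableSet.univ_pi hS).nullMeasurableSet, volume_pi_pi]

lemma measurableSet_cube (r : ℝ) : MeasurableSet {v : EuclideanSpace ℝ ι | ∀ i, |v i| ≤ r} := by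
  simp only [ofPred_forall]
  exact MeasurableSet.iInter fun i => measurableSet_le (by fun_prop) measurable_const

lemma volume_cube (r : ℝ) :
    volume {v : EuclideanSpace ℝ ι | ∀ i, |v i| ≤ r} = ENNReal.ofReal (2 * r) ^ Fintype.card ι := by
  simp only [abs_le, ← mem_Icc]
  rw [volume_setOf_forall_apply_mem _ fun _ => measurableSet_Icc]
  simp [Real.volume_Icc, two_mul]

variable [DecidableEq ι]

lemma volume_cube_eq_two_mul (r : ℝ) (k : ι) :
    volume {v : EuclideanSpace ℝ ι | ∀ i, |v i| ≤ r} =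
      2 * volume {v : EuclideanSpace ℝ ι | (∀ i, |v i| ≤ r) ∧ v k < 0} := by
  have hhalf : {v : EuclideanSpace ℝ ι | (∀ i, |v i| ≤ r) ∧ v k < 0} =
      {v | ∀ i, v i ∈ if i = k then Ico (-r) 0 else Icc (-r) r} := by
    ext v
    refine ⟨fun ⟨hv, hvk⟩ i => ?_, fun hv => ⟨fun i => abs_le.mpr ?_, ?_⟩⟩
    · split_ifs with hik
      · subst hik; exact ⟨(abs_le.mp (hv i)).1, hvk⟩
      · exact abs_le.mp (hv i)
    · have hvi := hv i
      split_ifs at hvi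
      · exact ⟨hvi.1, by linarith [hvi.1, hvi.2]⟩
      · exact hvi
    · have hvk := hv k
      rw [if_pos rfl] at hvk
      exact hvk.2
  have hprod (S : Set ℝ) : ∏ i ∈ Finset.univ.erase k,
      volume (if i = k then S else Icc (-r) r) = ∏ i ∈ Finset.univ.erase k, volume (Icc (-r) r) :=
    Finset.prod_congr rfl fun i hi => by rw [if_neg (Finset.ne_of_mem_erase hi)]
  simp only [abs_le, ← mem_Icc] at hhalf ⊢
  rw [hhalf, volume_setOf_forall_apply_mem _ fun _ => measurableSet_Icc,
    volume_setOf_forall_apply_mem _ fun i => by split_ifs <;> simp,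
    ← Finset.mul_prod_erase _ _ (Finset.mem_univ k),
    ← Finset.mul_prod_erase _ _ (Finset.mem_univ k),
    hprod, if_pos rfl, Real.volume_Icc, Real.volume_Ico, ← mul_assoc, ← ENNReal.ofReal_ofNat 2,
    ← ENNReal.ofReal_mul zero_le_two]
  ring_nf

end Cube

section Variance

variable {ι : Type*} [Fintype ι] [DecidableEq ι]

open ProbabilityTheory in
theorem le_integral_norm_sub_sq_of_shift_gap {F : EuclideanSpace ℝ ι → EuclideanSpace ℝ ι}
    {r δ M : ℝ} {i k : ι} (hr : 0 < r) (hδ : 0 ≤ δ) (hF : Measurable F)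
    (hFM : ∀ v, (∀ j, |v j| ≤ r) → ‖F v‖ ≤ M)
    (hgap : ∀ v, (∀ j, |v j| ≤ r) → v k < 0 →
      δ ≤ F v i - F (v + r • EuclideanSpace.single k (1 : ℝ)) i)
    (c : EuclideanSpace ℝ ι) :
    δ ^ 2 / 4 ≤ ∫ v, ‖F v - c‖ ^ 2 ∂volume[|{v | ∀ j, |v j| ≤ r}] := by
  set V : Set (EuclideanSpace ℝ ι) := {v | ∀ j, |v j| ≤ r}
  set A : Set (EuclideanSpace ℝ ι) := {v | (∀ j, |v j| ≤ r) ∧ v k < 0}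
  have hVA : volume V = 2 * volume A := volume_cube_eq_two_mul r k
  have hV0 : volume V ≠ 0 := by
    rw [volume_cube]; exact pow_ne_zero _ (ENNReal.ofReal_pos.mpr (by linarith)).ne'
  have hVfin : volume V ≠ ⊤ := by
    rw [volume_cube]; exact ENNReal.pow_ne_top ENNReal.ofReal_ne_top
  have hA0 : volume A ≠ 0 := by rintro h; simp [h] at hVA; exact hV0 hVA
  have hAfin : volume A ≠ ⊤ := by rintro h; simp [h] at hVA; exact hVfin hVA
  have hAmeas : MeasurableSet A := (measurableSet_cube r).inter
    (measurableSet_lt (f := fun v : EuclideanSpace ℝ ι => v k) (by fun_prop) measurable_const)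
  have hdisj (v) (hv : v ∈ A) : v + r • EuclideanSpace.single k (1 : ℝ) ∉ A := fun hvu => by
    have := hvu.2
    rw [add_smul_single_apply, if_pos rfl] at this
    linarith [(abs_le.mp (hv.1 k)).1]
  have hnorm : IntegrableOn (fun v => ‖F v - c‖ ^ 2) V :=
    .of_bound hVfin.lt_top (by fun_prop) ((M + ‖c‖) ^ 2) <|
      (ae_restrict_iff' (measurableSet_cube r)).mpr <| ae_of_all _ fun v hv => by
        rw [Real.norm_of_nonneg (by positivity)]
        gcongr
        exact (norm_sub_le _ _).trans (by linarith [hFM v hv])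
  have hcoord_le (v : EuclideanSpace ℝ ι) : (F v i - c i) ^ 2 ≤ ‖F v - c‖ ^ 2 := by
    have := abs_le.mp (PiLp.norm_apply_le (F v - c) i)
    exact sq_le_sq' this.1 this.2
  have hcoord : IntegrableOn (fun v => (F v i - c i) ^ 2) V :=
    hnorm.mono' (by fun_prop) (ae_of_all _ fun v => by
      rw [Real.norm_of_nonneg (sq_nonneg _)]; exact hcoord_le v)
  have hhalf := mul_measureReal_le_setIntegral_sq_sub hδ hcoord hAmeas hAfin (fun v hv => hv.1)
    (fun v hv => abs_add_smul_single_apply_le hv.1 hv.2) hdisj (fun v hv => hgap v hv.1 hv.2)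
  rw [ProbabilityTheory.cond, integral_smul_measure, smul_eq_mul]
  calc δ ^ 2 / 4 = (volume V)⁻¹.toReal * (δ ^ 2 / 2 * volume.real A) := by
        rw [hVA, measureReal_def, ENNReal.toReal_inv, ENNReal.toReal_mul, ENNReal.toReal_ofNat]
        have := ENNReal.toReal_pos hA0 hAfin
        field_simp
        ring
    _ ≤ (volume V)⁻¹.toReal * ∫ v in V, ‖F v - c‖ ^ 2 := by
        gcongr
        exact hhalf.trans (setIntegral_mono hcoord hnorm hcoord_le)

end Variance

section SupportInCube

variable {ι : Type*} [Fintype ι] {s ℓ : ℝ} {ν : Measure (EuclideanSpace ℝ ι)}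

lemma rieszTransform_apply {w : EuclideanSpace ℝ ι}
    (hint : Integrable (fun y => rieszKernel s (w - y)) ν) (i : ι) :
    rieszTransform s ν w i = ∫ y, rieszKernel s (w - y) i ∂ν :=
  ((EuclideanSpace.proj i).integral_comp_comm hint).symm

lemma norm_rieszTransform_le_of_ae_abs_le [IsFiniteMeasure ν] (hs : 0 ≤ s) (hℓ : 0 < ℓ)
    (hν : ∀ᵐ y ∂ν, ∀ j, |y j| ≤ ℓ / 2) {w : EuclideanSpace ℝ ι} {i : ι} (hw : ℓ ≤ w i) :
    ‖rieszTransform s ν w‖ ≤ 2 ^ s * ν.real univ / ℓ ^ s := by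
  refine (norm_rieszTransform_le hs (half_pos hℓ) (hν.mono fun y hy => le_norm_of_le_apply
    (i := i) ?_)).trans_eq ?_
  · rw [PiLp.sub_apply]; linarith [(abs_le.mp (hy i)).2]
  · rw [Real.rpow_neg (half_pos hℓ).le, Real.div_rpow hℓ.le zero_le_two, inv_div]; ring

theorem exists_pos_le_rieszTransform_apply_sub [DecidableEq ι] (hs : 0 < s) {i k : ι}
    (hik : i ≠ k ∨ Subsingleton ι) :
    ∃ a > 0, ∀ ℓ > 0, ∀ (ν : Measure (EuclideanSpace ℝ ι)) [IsFiniteMeasure ν],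
      (∀ᵐ y ∂ν, ∀ j, |y j| ≤ ℓ / 2) → ∀ w : EuclideanSpace ℝ ι, (∀ j, ℓ ≤ w j ∧ w j ≤ 3 * ℓ) →
      a * ν.real univ / ℓ ^ s ≤ rieszTransform s ν w i -
        rieszTransform s ν (w + (ℓ / 4) • EuclideanSpace.single k (1 : ℝ)) i := by
  obtain ⟨a, ha, hgap⟩ := exists_pos_le_rieszKernel_apply_sub hs hik
  refine ⟨a, ha, fun ℓ hℓ ν _ hν w hw => ?_⟩
  set u := (ℓ / 4) • EuclideanSpace.single k (1 : ℝ)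
  have hbox : ∀ᵐ y ∂ν, ∀ j, ℓ / 2 ≤ (w - y) j ∧ (w - y) j ≤ 7 * ℓ / 2 := hν.mono fun y hy j => by
    rw [PiLp.sub_apply]; constructor <;> linarith [abs_le.mp (hy j), hw j]
  have hshift (y : EuclideanSpace ℝ ι) : w + u - y = (w - y) + u := add_sub_right_comm w u y
  have hint := integrable_rieszKernel_sub hs.le (half_pos hℓ)
    (hbox.mono fun y hy => le_norm_of_le_apply (hy i).1)
  have hint' : Integrable (fun y => rieszKernel s (w + u - y)) ν :=
    integrable_rieszKernel_sub hs.le (half_pos hℓ) <| hbox.mono fun y hy => le_norm_of_le_apply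
      (i := i) <| by
        rw [hshift, add_smul_single_apply]
        split_ifs <;> linarith [(hy i).1]
  have hint_i : Integrable (fun y => rieszKernel s (w - y) i) ν :=
    (EuclideanSpace.proj (𝕜 := ℝ) i).integrable_comp hint
  have hint_i' : Integrable (fun y => rieszKernel s (w + u - y) i) ν :=
    (EuclideanSpace.proj (𝕜 := ℝ) i).integrable_comp hint'
  rw [rieszTransform_apply hint, rieszTransform_apply hint', ← integral_sub hint_i hint_i']
  calc a * ν.real univ / ℓ ^ s = ∫ _, a / ℓ ^ s ∂ν := by rw [integral_const, smul_eq_mul]; ring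
    _ ≤ _ := integral_mono_ae (integrable_const _) (hint_i.sub hint_i') <|
        hbox.mono fun y hy => by simpa only [Pi.sub_apply, hshift] using hgap ℓ hℓ _ hy

end SupportInCube

lemma exists_ne_or_subsingleton (ι : Type*) [Nonempty ι] : ∃ i k : ι, i ≠ k ∨ Subsingleton ι := by
  rcases subsingleton_or_nontrivial ι with h | h
  · obtain ⟨i⟩ := ‹Nonempty ι›
    exact ⟨i, i, .inr h⟩
  · obtain ⟨i, k, hik⟩ := exists_pair_ne ι
    exact ⟨i, k, .inl hik⟩

end RieszTransform

open RieszTransform in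
/-- Variance bound for the Riesz transform at a randomly shifted point: for `ν`
supported in the cube `Q` of edge `ℓ` centered at the origin, `x ∈ [5ℓ/4, 11ℓ/4]^d`,
and `v` uniform on the cube of edge `ℓ/2` centered at the origin, the random
variable `ξ = R^s_ν(x+v)` satisfies `|ξ| ≤ Cθ` and `Var ξ ≥ cθ²`, `θ = ‖ν‖/ℓ^s`. -/
theorem stmt12 (d : ℕ) (hd : 0 < d) (s : ℝ) (hs : 0 < s) :
    ∃ C c : ℝ, 0 < C ∧ 0 < c ∧
      ∀ ℓ : ℝ, 0 < ℓ →
      ∀ ν : Measure (EuclideanSpace ℝ (Fin d)), IsFiniteMeasure ν →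
        ν {y | ∀ i, |y i| ≤ ℓ / 2}ᶜ = 0 →
        ∀ x : EuclideanSpace ℝ (Fin d), (∀ i, 5 * ℓ / 4 ≤ x i ∧ x i ≤ 11 * ℓ / 4) →
        let V : Set (EuclideanSpace ℝ (Fin d)) := {v | ∀ i, |v i| ≤ ℓ / 4}
        let Pv : Measure (EuclideanSpace ℝ (Fin d)) := (volume V)⁻¹ • volume.restrict V
        let ξ : EuclideanSpace ℝ (Fin d) → EuclideanSpace ℝ (Fin d) :=
          fun v => ∫ y, (‖x + v - y‖ ^ (s + 1))⁻¹ • (x + v - y) ∂ν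
        let θ : ℝ := (ν Set.univ).toReal / ℓ ^ s
        (∀ v ∈ V, ‖ξ v‖ ≤ C * θ) ∧
          c * θ ^ 2 ≤ ∫ v, ‖ξ v - ∫ v', ξ v' ∂Pv‖ ^ 2 ∂Pv := by
  have : Nonempty (Fin d) := ⟨⟨0, hd⟩⟩
  obtain ⟨i, k, hik⟩ := exists_ne_or_subsingleton (Fin d)
  obtain ⟨a, ha, hdrop⟩ := exists_pos_le_rieszTransform_apply_sub hs hik
  refine ⟨2 ^ s, a ^ 2 / 4, by positivity, by positivity, fun ℓ hℓ ν hν hsupp x hx => ?_⟩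
  intro V Pv ξ θ
  have hξ (v : EuclideanSpace ℝ (Fin d)) : ξ v = rieszTransform s ν (x + v) := rfl
  have hθ : θ = ν.real univ / ℓ ^ s := rfl
  have hxv (v : EuclideanSpace ℝ (Fin d)) (hv : v ∈ V) (j : Fin d) :
      ℓ ≤ (x + v) j ∧ (x + v) j ≤ 3 * ℓ := by
    rw [PiLp.add_apply]; constructor <;> linarith [hx j, abs_le.mp (hv j)]
  have hbound (v : EuclideanSpace ℝ (Fin d)) (hv : v ∈ V) : ‖ξ v‖ ≤ 2 ^ s * θ := by
    rw [hξ, hθ, ← mul_div_assoc]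
    exact norm_rieszTransform_le_of_ae_abs_le hs.le hℓ hsupp (hxv v hv i).1
  refine ⟨hbound, ?_⟩
  have hgap (v : EuclideanSpace ℝ (Fin d)) (hv : v ∈ V) :
      a * θ ≤ ξ v i - ξ (v + (ℓ / 4) • EuclideanSpace.single k (1 : ℝ)) i := by
    simpa only [hξ, ← add_assoc, hθ, mul_div_assoc] using hdrop ℓ hℓ ν hsupp (x + v) (hxv v hv)
  have hvar := le_integral_norm_sub_sq_of_shift_gap (by positivity) (by positivity)
    ((measurable_rieszTransform s ν).comp (measurable_const_add x)) hbound
    (fun v hv _ => hgap v hv) (∫ v', ξ v' ∂Pv)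
  calc a ^ 2 / 4 * θ ^ 2 = (a * θ) ^ 2 / 4 := by ring
    _ ≤ _ := hvar
end

section
/- Let 0 < λ < 1/2, let ℓ₀ > ℓ₁ > … > ℓ_n > 0 satisfy ℓ_{k+1} < λℓ_k, and let E_n ⊂ ℝ^d be the n-th generation corner Cantor set consisting of N = 2^{nd} cubes Q_j^n of edge length ℓ_n (at each step each cube of edge ℓ_k contains 2^d corner cubes of edge ℓ_{k+1}). Let m be the natural probability measure giving mass 2^{−nd} uniformly to each Q_j^n. Then for every x ∈ ℝ^d and 0 < s < d: ∫₀^∞ [m(B(x,r))/r^s]² dr/r ≤ C(d,s) Σ_{k=0}^n θ_k², where θ_k = 2^{−kd}/ℓ_k^s. -/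
/-!
Write `M r = m(B(x, r))`. Generation-`g` corners whose digit sequences first differ at step `k`
are more than `ℓ g` apart in that coordinate, because `2 ℓ (k + 1) < ℓ k`. Hence a ball of radius
`r ≤ ℓ g` meets at most `4 ^ d` generation-`g` cubes and `M r ≤ 4 ^ d 2^{-gd}`; for `r ≤ ℓ n` the
volume of the ball gives the extra factor `(2 r / ℓ n) ^ d`. So `M r ≲ 2^{-nd} (r / ℓ n) ^ d` below
`ℓ n`, and `M r ≲ 2^{-kd}` for `ℓ k < r ≤ ℓ (k - 1)`. Dominating `(M r / r ^ s) ^ 2 / r` scale by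
scale, each piece is `θ k ^ 2` times one of the scale-invariant integrals
`∫₀^ℓ (r / ℓ)^{2(d - s)} dr / r = 1 / (2 (d - s))` and `∫_ℓ^∞ (r / ℓ)^{-2s} dr / r = 1 / (2 s)`.
-/

open MeasureTheory Set

section ScaleKernels

variable {L p : ℝ}

lemma eqOn_div_rpow_div_self (hL : 0 < L) (p : ℝ) :
    EqOn (fun r => (r / L) ^ p / r) (fun r => (L ^ p)⁻¹ * r ^ (p - 1)) (Ioi 0) := by
  intro r (hr : 0 < r)
  simp only
  rw [Real.div_rpow hr.le hL.le, Real.rpow_sub_one hr.ne']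
  ring

lemma sq_mul_rpow_div_rpow_div_self {r : ℝ} (hr : 0 < r) (hL : 0 < L) (A x s : ℝ) :
    (A * (r / L) ^ x / r ^ s) ^ 2 / r = (A / L ^ s) ^ 2 * ((r / L) ^ (2 * (x - s)) / r) := by
  have hu : 0 < r / L := div_pos hr hL
  rw [mul_comm 2, Real.rpow_mul hu.le, Real.rpow_sub hu, Real.div_rpow hr.le hL.le s,
    Real.rpow_two]
  have := Real.rpow_pos_of_pos hr s
  have := Real.rpow_pos_of_pos hL s
  field_simp

variable (L p) in
noncomputable def smallScaleKernel : ℝ → ℝ := (Ioc 0 L).indicator fun r => (r / L) ^ p / r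

variable (L p) in
noncomputable def largeScaleKernel : ℝ → ℝ := (Ioi L).indicator fun r => (r / L) ^ (-p) / r

lemma smallScaleKernel_nonneg (hL : 0 < L) (r : ℝ) : 0 ≤ smallScaleKernel L p r :=
  indicator_nonneg (fun _ hr => div_nonneg (Real.rpow_nonneg (div_pos hr.1 hL).le _) hr.1.le) r

lemma largeScaleKernel_nonneg (hL : 0 < L) (r : ℝ) : 0 ≤ largeScaleKernel L p r :=
  indicator_nonneg (fun r (hr : L < r) =>
    div_nonneg (Real.rpow_nonneg (div_pos (hL.trans hr) hL).le _) (hL.trans hr).le) r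

lemma integrableOn_smallScaleKernel (hL : 0 < L) (hp : 0 < p) :
    IntegrableOn (smallScaleKernel L p) (Ioi 0) := by
  refine (IntegrableOn.integrable_indicator ?_ measurableSet_Ioc).integrableOn
  exact IntegrableOn.congr_fun
    (((intervalIntegral.intervalIntegrable_rpow' (by linarith : -1 < p - 1)).1).const_mul _)
    ((eqOn_div_rpow_div_self hL p).mono Ioc_subset_Ioi_self).symm measurableSet_Ioc

lemma integrableOn_largeScaleKernel (hL : 0 < L) (hp : 0 < p) :
    IntegrableOn (largeScaleKernel L p) (Ioi 0) := by
  refine (IntegrableOn.integrable_indicator ?_ measurableSet_Ioi).integrableOn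
  exact IntegrableOn.congr_fun
    ((integrableOn_Ioi_rpow_of_lt (by linarith : -p - 1 < -1) hL).const_mul _)
    ((eqOn_div_rpow_div_self hL (-p)).mono (Ioi_subset_Ioi hL.le)).symm measurableSet_Ioi

lemma setIntegral_smallScaleKernel (hL : 0 < L) (hp : 0 < p) :
    ∫ r in Ioi 0, smallScaleKernel L p r = 1 / p := by
  rw [smallScaleKernel, setIntegral_indicator measurableSet_Ioc,
    inter_eq_right.2 Ioc_subset_Ioi_self, setIntegral_congr_fun measurableSet_Ioc
      ((eqOn_div_rpow_div_self hL p).mono Ioc_subset_Ioi_self), integral_const_mul,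
    ← intervalIntegral.integral_of_le hL.le, integral_rpow (Or.inl (by linarith)),
    sub_add_cancel, Real.zero_rpow hp.ne', sub_zero]
  field_simp

lemma setIntegral_largeScaleKernel (hL : 0 < L) (hp : 0 < p) :
    ∫ r in Ioi 0, largeScaleKernel L p r = 1 / p := by
  rw [largeScaleKernel, setIntegral_indicator measurableSet_Ioi,
    inter_eq_right.2 (Ioi_subset_Ioi hL.le), setIntegral_congr_fun measurableSet_Ioi
      ((eqOn_div_rpow_div_self hL (-p)).mono (Ioi_subset_Ioi hL.le)), integral_const_mul,
    integral_Ioi_rpow_of_lt (by linarith) hL, sub_add_cancel, Real.rpow_neg hL.le]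
  field_simp

end ScaleKernels

section ScaleDecomposition

variable {M : ℝ → ℝ} {L a : ℕ → ℝ} {n : ℕ} {s D : ℝ}

lemma sq_div_rpow_div_self_le_sum_scaleKernel (hL : ∀ k, 0 < L k) (hM : ∀ r, 0 ≤ M r)
    (hsmall : ∀ r, 0 < r → r ≤ L n → M r ≤ a n * (r / L n) ^ D)
    (hlarge : ∀ r, L n < r → ∃ k ≤ n, L k < r ∧ M r ≤ a k) {r : ℝ} (hr : 0 < r) :
    (M r / r ^ s) ^ 2 / r ≤ (a n / L n ^ s) ^ 2 * smallScaleKernel (L n) (2 * (D - s)) r +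
      ∑ k ∈ Finset.range (n + 1), (a k / L k ^ s) ^ 2 * largeScaleKernel (L k) (2 * s) r := by
  have h0 : 0 ≤ M r / r ^ s := div_nonneg (hM r) (Real.rpow_nonneg hr.le s)
  have hterm_nonneg : ∀ k, 0 ≤ (a k / L k ^ s) ^ 2 * largeScaleKernel (L k) (2 * s) r :=
    fun k => mul_nonneg (sq_nonneg _) (largeScaleKernel_nonneg (hL k) r)
  rcases le_or_gt r (L n) with hrn | hrn
  · calc (M r / r ^ s) ^ 2 / r ≤ (a n * (r / L n) ^ D / r ^ s) ^ 2 / r := by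
          gcongr
          exact hsmall r hr hrn
      _ = (a n / L n ^ s) ^ 2 * smallScaleKernel (L n) (2 * (D - s)) r := by
          rw [sq_mul_rpow_div_rpow_div_self hr (hL n), smallScaleKernel,
            indicator_of_mem (show r ∈ Ioc 0 (L n) from ⟨hr, hrn⟩)]
      _ ≤ _ := le_add_of_nonneg_right (Finset.sum_nonneg fun k _ => hterm_nonneg k)
  · obtain ⟨k, hkn, hk, hMk⟩ := hlarge r hrn
    calc (M r / r ^ s) ^ 2 / r ≤ (a k * (r / L k) ^ (0 : ℝ) / r ^ s) ^ 2 / r := by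
          rw [Real.rpow_zero, mul_one]
          gcongr
      _ = (a k / L k ^ s) ^ 2 * largeScaleKernel (L k) (2 * s) r := by
          rw [sq_mul_rpow_div_rpow_div_self hr (hL k), zero_sub, mul_neg, largeScaleKernel,
            indicator_of_mem (show r ∈ Ioi (L k) from hk)]
      _ ≤ ∑ k ∈ Finset.range (n + 1), (a k / L k ^ s) ^ 2 * largeScaleKernel (L k) (2 * s) r :=
          Finset.single_le_sum (fun k _ => hterm_nonneg k)
            (Finset.mem_range.2 (Nat.lt_succ_of_le hkn))
      _ ≤ _ := le_add_of_nonneg_left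
          (mul_nonneg (sq_nonneg _) (smallScaleKernel_nonneg (hL n) r))

theorem setIntegral_sq_div_rpow_div_self_le (hs : 0 < s) (hsD : s < D) (hL : ∀ k, 0 < L k)
    (hM : ∀ r, 0 ≤ M r) (hsmall : ∀ r, 0 < r → r ≤ L n → M r ≤ a n * (r / L n) ^ D)
    (hlarge : ∀ r, L n < r → ∃ k ≤ n, L k < r ∧ M r ≤ a k) :
    ∫ r in Ioi 0, (M r / r ^ s) ^ 2 / r ≤
      (1 / (2 * (D - s)) + 1 / (2 * s)) * ∑ k ∈ Finset.range (n + 1), (a k / L k ^ s) ^ 2 := by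
  have hDs : 0 < 2 * (D - s) := by linarith
  have hs2 : 0 < 2 * s := by linarith
  have hsmall_int := (integrableOn_smallScaleKernel (hL n) hDs).const_mul ((a n / L n ^ s) ^ 2)
  have hlarge_int := integrable_finsetSum (Finset.range (n + 1)) fun k _ =>
    (integrableOn_largeScaleKernel (hL k) hs2).const_mul ((a k / L k ^ s) ^ 2)
  have hc : (a n / L n ^ s) ^ 2 ≤ ∑ k ∈ Finset.range (n + 1), (a k / L k ^ s) ^ 2 :=
    Finset.single_le_sum (f := fun k => (a k / L k ^ s) ^ 2) (fun k _ => sq_nonneg _)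
      (Finset.self_mem_range_succ n)
  calc ∫ r in Ioi 0, (M r / r ^ s) ^ 2 / r
      ≤ ∫ r in Ioi 0, ((a n / L n ^ s) ^ 2 * smallScaleKernel (L n) (2 * (D - s)) r +
          ∑ k ∈ Finset.range (n + 1), (a k / L k ^ s) ^ 2 * largeScaleKernel (L k) (2 * s) r) :=
        integral_mono_of_nonneg
          (ae_restrict_of_forall_mem measurableSet_Ioi fun r (hr : 0 < r) => by positivity)
          (hsmall_int.add hlarge_int) (ae_restrict_of_forall_mem measurableSet_Ioi
            fun r hr => sq_div_rpow_div_self_le_sum_scaleKernel hL hM hsmall hlarge hr)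
    _ = (a n / L n ^ s) ^ 2 * (1 / (2 * (D - s))) +
          (∑ k ∈ Finset.range (n + 1), (a k / L k ^ s) ^ 2) * (1 / (2 * s)) := by
        rw [integral_add hsmall_int hlarge_int, integral_const_mul,
          setIntegral_smallScaleKernel (hL n) hDs, integral_finsetSum _ fun k _ =>
            (integrableOn_largeScaleKernel (hL k) hs2).const_mul _, Finset.sum_mul]
        simp only [integral_const_mul, setIntegral_largeScaleKernel (hL _) hs2]
    _ ≤ _ := by
        rw [add_mul, mul_comm (1 / (2 * (D - s))), mul_comm (1 / (2 * s))]
        gcongr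

end ScaleDecomposition

namespace CornerCantor

variable (ℓ : ℕ → ℝ)

def partialCorner (b : ℕ → Bool) (g : ℕ) : ℝ :=
  ∑ k ∈ Finset.range g, if b k then ℓ k - ℓ (k + 1) else 0

variable {ℓ}

lemma partialCorner_succ (b : ℕ → Bool) (g : ℕ) :
    partialCorner ℓ b (g + 1) = partialCorner ℓ b g + if b g then ℓ g - ℓ (g + 1) else 0 :=
  Finset.sum_range_succ _ _

lemma partialCorner_congr {b b' : ℕ → Bool} {g : ℕ} (h : ∀ k < g, b k = b' k) :
    partialCorner ℓ b g = partialCorner ℓ b' g :=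
  Finset.sum_congr rfl fun k hk => by rw [h k (Finset.mem_range.1 hk)]

lemma partialCorner_mem_Icc {m : ℕ} (hℓ : ∀ k < m, ℓ (k + 1) ≤ ℓ k) (b : ℕ → Bool) {g : ℕ}
    (hgm : g ≤ m) :
    partialCorner ℓ b m ∈ Icc (partialCorner ℓ b g) (partialCorner ℓ b g + (ℓ g - ℓ m)) := by
  induction m, hgm using Nat.le_induction with
  | base => simp
  | succ m hgm ih =>
    obtain ⟨ih₁, ih₂⟩ := ih fun k hk => hℓ k (by omega)
    have := hℓ m (by omega)
    rw [partialCorner_succ]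
    constructor <;> split <;> linarith

/-- Digit sequences that first differ at step `k` give corners at distance at least
`ℓ k - 2 ℓ (k + 1) + ℓ g`, since the later steps move a corner by at most `ℓ (k + 1) - ℓ g`. -/
lemma lt_abs_partialCorner_sub {g : ℕ} (hℓ : ∀ k < g, 2 * ℓ (k + 1) < ℓ k) (hℓ0 : ∀ k, 0 ≤ ℓ k)
    {b b' : ℕ → Bool} (h : ∃ k < g, b k ≠ b' k) :
    ℓ g < |partialCorner ℓ b g - partialCorner ℓ b' g| := by
  induction g with
  | zero => simp at h
  | succ g ih =>
    have hstep := hℓ g (by omega)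
    have := hℓ0 (g + 1)
    rw [partialCorner_succ, partialCorner_succ]
    by_cases hlow : ∃ k < g, b k ≠ b' k
    · have ih := ih (fun k hk => hℓ k (by omega)) hlow
      set δ := (if b g then ℓ g - ℓ (g + 1) else 0) - if b' g then ℓ g - ℓ (g + 1) else 0
      have hδ : |δ| ≤ ℓ g - ℓ (g + 1) := by
        simp only [δ]; split <;> split <;> rw [abs_le] <;> constructor <;> linarith
      have := abs_sub_abs_le_abs_sub (partialCorner ℓ b g - partialCorner ℓ b' g) (-δ)
      rw [abs_neg, sub_neg_eq_add] at this
      calc ℓ (g + 1) < |partialCorner ℓ b g - partialCorner ℓ b' g + δ| := by linarith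
        _ = _ := by simp only [δ]; ring_nf
    · push Not at hlow
      obtain ⟨k, hk, hne⟩ := h
      obtain rfl : k = g := by
        by_contra hkg
        exact hne (hlow k (by omega))
      have hc : 0 ≤ ℓ k - ℓ (k + 1) := by linarith
      rw [partialCorner_congr hlow, add_sub_add_left_eq_sub]
      revert hne
      cases b k <;> cases b' k <;> simp [abs_of_nonneg hc, abs_sub_comm (ℓ (k + 1))] <;> linarith

lemma eq_of_abs_partialCorner_sub_le {g : ℕ} (hℓ : ∀ k < g, 2 * ℓ (k + 1) < ℓ k)
    (hℓ0 : ∀ k, 0 ≤ ℓ k) {b b' : ℕ → Bool}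
    (h : |partialCorner ℓ b g - partialCorner ℓ b' g| ≤ ℓ g) : ∀ k < g, b k = b' k := by
  by_contra! hne
  exact (lt_abs_partialCorner_sub hℓ hℓ0 hne).not_ge h

lemma abs_sub_lt_of_floor_div_eq {a δ u v : ℝ} (hδ : 0 < δ) (h : ⌊(u - a) / δ⌋ = ⌊(v - a) / δ⌋) :
    |u - v| < δ := by
  have := Int.abs_sub_lt_one_of_floor_eq_floor h
  rwa [← sub_div, sub_sub_sub_cancel_right, abs_div, abs_of_pos hδ, div_lt_one hδ] at this

lemma volume_preimage_ofLp_pi_Icc {d : ℕ} (a : Fin d → ℝ) (c : ℝ) :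
    volume ((WithLp.ofLp : EuclideanSpace ℝ (Fin d) → Fin d → ℝ) ⁻¹'
      univ.pi fun i => Icc (a i) (a i + c)) = ENNReal.ofReal c ^ d := by
  rw [(PiLp.volume_preserving_ofLp (Fin d)).measure_preimage
    (MeasurableSet.univ_pi fun _ => measurableSet_Icc).nullMeasurableSet, volume_pi_pi]
  simp [Real.volume_Icc]

lemma ball_subset_preimage_ofLp_pi_Icc {d : ℕ} (x : EuclideanSpace ℝ (Fin d)) (r : ℝ) :
    Metric.ball x r ⊆ WithLp.ofLp ⁻¹' univ.pi fun i => Icc (x i - r) (x i - r + 2 * r) := by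
  intro y hy i _
  have := (Real.dist_eq _ _ ▸ PiLp.dist_apply_le y x i).trans_lt hy
  constructor <;> linarith [abs_lt.1 this]

variable {d n : ℕ} (ℓ : ℕ → ℝ)

def corner (ε : Fin n → Fin d → Bool) (i : Fin d) : ℝ :=
  ∑ k : Fin n, if ε k i then ℓ k - ℓ (k + 1) else 0

def cube (ε : Fin n → Fin d → Bool) : Set (EuclideanSpace ℝ (Fin d)) :=
  {y | ∀ i, corner ℓ ε i ≤ y i ∧ y i ≤ corner ℓ ε i + ℓ n}

def digits (ε : Fin n → Fin d → Bool) (i : Fin d) (k : ℕ) : Bool :=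
  if h : k < n then ε ⟨k, h⟩ i else false

variable {ℓ}

lemma corner_eq_partialCorner (ε : Fin n → Fin d → Bool) (i : Fin d) :
    corner ℓ ε i = partialCorner ℓ (digits ε i) n := by
  rw [corner, partialCorner, ← Fin.sum_univ_eq_sum_range]
  simp [digits]

lemma cube_eq_preimage_ofLp (ε : Fin n → Fin d → Bool) :
    cube ℓ ε = WithLp.ofLp ⁻¹' univ.pi fun i => Icc (corner ℓ ε i) (corner ℓ ε i + ℓ n) := by
  ext y
  simp only [cube, mem_preimage, mem_univ_pi, mem_Icc]; rfl

lemma measurableSet_cube (ε : Fin n → Fin d → Bool) : MeasurableSet (cube ℓ ε) := by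
  rw [cube_eq_preimage_ofLp]
  exact (MeasurableSet.univ_pi fun _ => measurableSet_Icc).preimage (WithLp.measurable_ofLp _ _)

lemma volume_cube (ε : Fin n → Fin d → Bool) :
    volume (cube ℓ ε) = ENNReal.ofReal (ℓ n) ^ d := by
  rw [cube_eq_preimage_ofLp, volume_preimage_ofLp_pi_Icc]

lemma mem_Icc_partialCorner_of_mem_cube (hℓ : ∀ k < n, ℓ (k + 1) ≤ ℓ k)
    {ε : Fin n → Fin d → Bool} {y : EuclideanSpace ℝ (Fin d)} (hy : y ∈ cube ℓ ε) (i : Fin d)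
    {g : ℕ} (hg : g ≤ n) :
    y i ∈ Icc (partialCorner ℓ (digits ε i) g) (partialCorner ℓ (digits ε i) g + ℓ g) := by
  have h := partialCorner_mem_Icc hℓ (digits ε i) hg
  rw [← corner_eq_partialCorner] at h
  constructor <;> linarith [h.1, h.2, (hy i).1, (hy i).2]

open scoped Classical in
noncomputable def cubesMeeting (n : ℕ) (ℓ : ℕ → ℝ) (S : Set (EuclideanSpace ℝ (Fin d))) :
    Finset (Fin n → Fin d → Bool) :=
  {ε | (cube ℓ ε ∩ S).Nonempty}

lemma partialCorner_sub_mem_Icc_of_mem_cubesMeeting_ball (hℓ : ∀ k < n, ℓ (k + 1) ≤ ℓ k)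
    {g : ℕ} (hg : g ≤ n) {x : EuclideanSpace ℝ (Fin d)} {r : ℝ} (hr : r ≤ ℓ g)
    {ε : Fin n → Fin d → Bool} (hε : ε ∈ cubesMeeting n ℓ (Metric.ball x r)) (i : Fin d) :
    partialCorner ℓ (digits ε i) g - (x i - r - ℓ g) ∈ Icc 0 (3 * ℓ g) := by
  classical
  obtain ⟨y, hy, hyx⟩ := (Finset.mem_filter.1 hε).2
  have hyi := mem_Icc_partialCorner_of_mem_cube hℓ hy i hg
  have := (Real.dist_eq _ _ ▸ PiLp.dist_apply_le y x i).trans_lt hyx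
  constructor <;> linarith [hyi.1, hyi.2, abs_lt.1 this]

/-- Below scale `ℓ g`, the generation-`g` corners of the cubes meeting the ball lie, in each
coordinate, in an interval of length `3 ℓ g` and are `ℓ g`-separated, so there are at most `4`
choices per coordinate; the remaining `n - g` digits are free. -/
lemma card_cubesMeeting_ball_le (hℓ : ∀ k < n, 2 * ℓ (k + 1) < ℓ k) (hpos : ∀ k, 0 < ℓ k)
    {g : ℕ} (hg : g ≤ n) (x : EuclideanSpace ℝ (Fin d)) {r : ℝ} (hr : r ≤ ℓ g) :
    (cubesMeeting n ℓ (Metric.ball x r)).card ≤ 4 ^ d * 2 ^ ((n - g) * d) := by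
  have hanti : ∀ k < n, ℓ (k + 1) ≤ ℓ k := fun k hk => by linarith [hℓ k hk, hpos (k + 1)]
  set F := cubesMeeting n ℓ (Metric.ball x r)
  set Φ : (Fin n → Fin d → Bool) → (Fin d → ℤ) × (Fin (n - g) → Fin d → Bool) := fun ε =>
    (fun i => ⌊(partialCorner ℓ (digits ε i) g - (x i - r - ℓ g)) / ℓ g⌋,
      fun j => ε ⟨g + j, by omega⟩)
  have hmaps : ∀ ε ∈ F, Φ ε ∈ Fintype.piFinset (fun _ => Finset.Icc (0 : ℤ) 3) ×ˢ Finset.univ := by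
    intro ε hε
    simp only [Finset.mem_product, Fintype.mem_piFinset, Finset.mem_Icc, Finset.mem_univ,
      and_true, Φ]
    intro i
    obtain ⟨h₀, h₃⟩ := partialCorner_sub_mem_Icc_of_mem_cubesMeeting_ball hanti hg hr hε i
    exact ⟨Int.floor_nonneg.2 (div_nonneg h₀ (hpos g).le),
      Int.floor_le_iff.2 (by rw [div_lt_iff₀ (hpos g)]; push_cast; linarith [hpos g])⟩
  have hinj : InjOn Φ F := by
    intro ε _ ε' _ heq
    have hdigits : ∀ i, ∀ k < g, digits ε i k = digits ε' i k := fun i =>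
      eq_of_abs_partialCorner_sub_le (fun k hk => hℓ k (by omega)) (fun k => (hpos k).le)
        (abs_sub_lt_of_floor_div_eq (hpos g) (congrFun (congrArg Prod.fst heq) i)).le
    funext k i
    by_cases hk : (k : ℕ) < g
    · simpa [digits] using hdigits i k hk
    · have := congrFun (congrFun (congrArg Prod.snd heq) ⟨k - g, by omega⟩) i
      simpa [Φ, show g + (k - g) = (k : ℕ) by omega] using this
  calc F.card ≤ (Fintype.piFinset (fun _ => Finset.Icc (0 : ℤ) 3) ×ˢ Finset.univ).card :=
        Finset.card_le_card_of_injOn Φ hmaps hinj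
    _ = 4 ^ d * 2 ^ ((n - g) * d) := by
        simp [Finset.card_product, Fintype.card_piFinset, ← pow_mul, Nat.mul_comm]

variable (d n ℓ) in
noncomputable def naturalMeasure : Measure (EuclideanSpace ℝ (Fin d)) :=
  ((2 : ENNReal) ^ (n * d))⁻¹ •
    ∑ ε : Fin n → Fin d → Bool, (volume (cube ℓ ε))⁻¹ • volume.restrict (cube ℓ ε)

lemma volume_real_cube (hℓ : 0 ≤ ℓ n) (ε : Fin n → Fin d → Bool) :
    volume.real (cube ℓ ε) = ℓ n ^ d := by
  rw [measureReal_def, volume_cube, ENNReal.toReal_pow, ENNReal.toReal_ofReal hℓ]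

lemma naturalMeasure_real (hℓ : 0 < ℓ n) (S : Set (EuclideanSpace ℝ (Fin d))) :
    (naturalMeasure d n ℓ).real S =
      (∑ ε : Fin n → Fin d → Bool, volume.real (S ∩ cube ℓ ε)) / (2 ^ (n * d) * ℓ n ^ d) := by
  have hfin : ∀ ε : Fin n → Fin d → Bool, volume (S ∩ cube ℓ ε) ≠ ⊤ := fun ε =>
    ne_top_of_le_ne_top (by simp [volume_cube]) (measure_mono inter_subset_right)
  simp only [measureReal_def, naturalMeasure, Measure.smul_apply, Measure.coe_finsetSum,
    Finset.sum_apply, smul_eq_mul, Measure.restrict_apply' (measurableSet_cube _), volume_cube,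
    ← Finset.mul_sum, ENNReal.toReal_mul, ENNReal.toReal_inv, ENNReal.toReal_pow,
    ENNReal.toReal_ofReal hℓ.le, ENNReal.toReal_sum fun ε _ => hfin ε, ENNReal.toReal_ofNat]
  field_simp

lemma naturalMeasure_real_le (hℓ : 0 < ℓ n) {S : Set (EuclideanSpace ℝ (Fin d))} {t : ℝ}
    (ht : ∀ ε : Fin n → Fin d → Bool, volume.real (S ∩ cube ℓ ε) ≤ t) :
    (naturalMeasure d n ℓ).real S ≤
      (cubesMeeting n ℓ S).card * t / (2 ^ (n * d) * ℓ n ^ d) := by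
  classical
  rw [naturalMeasure_real hℓ]
  gcongr
  rw [← Finset.sum_filter_of_ne (p := fun ε => (cube ℓ ε ∩ S).Nonempty) fun ε _ hε => ?_]
  · exact (Finset.sum_le_card_nsmul _ _ _ fun ε _ => ht ε).trans_eq (nsmul_eq_mul _ _)
  · contrapose! hε
    rw [inter_comm, hε, measureReal_empty]

lemma volume_real_inter_cube_le (hℓ : 0 ≤ ℓ n) (S : Set (EuclideanSpace ℝ (Fin d)))
    (ε : Fin n → Fin d → Bool) : volume.real (S ∩ cube ℓ ε) ≤ ℓ n ^ d :=
  (measureReal_mono inter_subset_right (by simp [volume_cube])).trans_eq (volume_real_cube hℓ ε)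

lemma naturalMeasure_real_le_one (hℓ : 0 < ℓ n) (S : Set (EuclideanSpace ℝ (Fin d))) :
    (naturalMeasure d n ℓ).real S ≤ 1 := by
  refine (naturalMeasure_real_le hℓ (volume_real_inter_cube_le hℓ.le S)).trans ?_
  have hcard : ((cubesMeeting n ℓ S).card : ℝ) ≤ 2 ^ (n * d) := by
    exact_mod_cast (Finset.card_le_univ _).trans_eq (by simp [← pow_mul, Nat.mul_comm])
  rw [div_le_one (by positivity)]
  gcongr

lemma naturalMeasure_real_ball_le (hℓ : ∀ k < n, 2 * ℓ (k + 1) < ℓ k) (hpos : ∀ k, 0 < ℓ k)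
    {g : ℕ} (hg : g ≤ n) (x : EuclideanSpace ℝ (Fin d)) {r : ℝ} (hr : r ≤ ℓ g) :
    (naturalMeasure d n ℓ).real (Metric.ball x r) ≤ 4 ^ d / 2 ^ (g * d) := by
  have hsplit : (2 : ℝ) ^ (n * d) = 2 ^ (g * d) * 2 ^ ((n - g) * d) := by
    rw [← pow_add, ← add_mul, Nat.add_sub_cancel' hg]
  have hn := hpos n
  calc (naturalMeasure d n ℓ).real (Metric.ball x r)
      ≤ (cubesMeeting n ℓ (Metric.ball x r)).card * ℓ n ^ d / (2 ^ (n * d) * ℓ n ^ d) :=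
        naturalMeasure_real_le hn (volume_real_inter_cube_le hn.le _)
    _ ≤ (4 ^ d * 2 ^ ((n - g) * d)) * ℓ n ^ d / (2 ^ (n * d) * ℓ n ^ d) := by
        gcongr
        exact_mod_cast card_cubesMeeting_ball_le hℓ hpos hg x hr
    _ = 4 ^ d / 2 ^ (g * d) := by
        rw [hsplit]
        field_simp

lemma naturalMeasure_real_ball_le_of_le_last (hℓ : ∀ k < n, 2 * ℓ (k + 1) < ℓ k)
    (hpos : ∀ k, 0 < ℓ k) (x : EuclideanSpace ℝ (Fin d)) {r : ℝ} (hr₀ : 0 ≤ r) (hr : r ≤ ℓ n) :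
    (naturalMeasure d n ℓ).real (Metric.ball x r) ≤ 8 ^ d / 2 ^ (n * d) * (r / ℓ n) ^ d := by
  have hn := hpos n
  have hball : ∀ ε : Fin n → Fin d → Bool,
      volume.real (Metric.ball x r ∩ cube ℓ ε) ≤ (2 * r) ^ d := by
    intro ε
    refine (measureReal_mono (inter_subset_left.trans (ball_subset_preimage_ofLp_pi_Icc x r))
      ?_).trans_eq ?_
    · rw [volume_preimage_ofLp_pi_Icc]
      exact ENNReal.pow_ne_top ENNReal.ofReal_ne_top
    · rw [measureReal_def, volume_preimage_ofLp_pi_Icc, ENNReal.toReal_pow,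
        ENNReal.toReal_ofReal (by positivity)]
  have hcard : ((cubesMeeting n ℓ (Metric.ball x r)).card : ℝ) ≤ 4 ^ d := by
    exact_mod_cast (card_cubesMeeting_ball_le hℓ hpos le_rfl x hr).trans_eq (by simp)
  calc (naturalMeasure d n ℓ).real (Metric.ball x r)
      ≤ (cubesMeeting n ℓ (Metric.ball x r)).card * (2 * r) ^ d / (2 ^ (n * d) * ℓ n ^ d) :=
        naturalMeasure_real_le hn hball
    _ ≤ 4 ^ d * (2 * r) ^ d / (2 ^ (n * d) * ℓ n ^ d) := by gcongr
    _ = 8 ^ d / 2 ^ (n * d) * (r / ℓ n) ^ d := by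
        rw [div_pow, mul_pow, show (8 : ℝ) ^ d = 4 ^ d * 2 ^ d by rw [← mul_pow]; norm_num]
        field_simp

/-- At a scale `r > ℓ n`, with `k` the first generation such that `ℓ k < r`, the ball meets
few generation-`(k - 1)` cubes. -/
lemma exists_naturalMeasure_real_ball_le (hℓ : ∀ k < n, 2 * ℓ (k + 1) < ℓ k)
    (hpos : ∀ k, 0 < ℓ k) (x : EuclideanSpace ℝ (Fin d)) {r : ℝ} (hr : ℓ n < r) :
    ∃ k ≤ n, ℓ k < r ∧ (naturalMeasure d n ℓ).real (Metric.ball x r) ≤ 8 ^ d / 2 ^ (k * d) := by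
  classical
  have hex : ∃ k, ℓ k < r := ⟨n, hr⟩
  refine ⟨Nat.find hex, Nat.find_min' hex hr, Nat.find_spec hex, ?_⟩
  have hmin : ∀ j < Nat.find hex, r ≤ ℓ j := fun j hj => not_lt.1 (Nat.find_min hex hj)
  have hkn := Nat.find_min' hex hr
  generalize Nat.find hex = k at hmin hkn
  cases k with
  | zero =>
    simpa using (naturalMeasure_real_le_one (hpos n) _).trans (one_le_pow₀ (by norm_num))
  | succ j =>
    refine (naturalMeasure_real_ball_le hℓ hpos (by omega) x (hmin j j.lt_succ_self)).trans_eq ?_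
    rw [show (8 : ℝ) = 4 * 2 by norm_num, mul_pow, add_mul, one_mul, pow_add]
    field_simp

end CornerCantor

theorem stmt13_general (d : ℕ) (s : ℝ) (hs : 0 < s) (hsd : s < d) :
    ∃ C : ℝ, 0 < C ∧
      ∀ (n : ℕ) (ℓ : ℕ → ℝ) (lam : ℝ), 0 < lam → lam < 1 / 2 →
        (∀ k, 0 < ℓ k) → (∀ k, k < n → ℓ (k + 1) < lam * ℓ k) →
        -- lower-left corners of the generation-`n` cubes, indexed by the choices of
        -- corners at each of the `n` subdivision steps
        let corner : (Fin n → Fin d → Bool) → Fin d → ℝ := fun ε i =>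
          ∑ k : Fin n, if ε k i then ℓ (k : ℕ) - ℓ ((k : ℕ) + 1) else 0
        let cube : (Fin n → Fin d → Bool) → Set (EuclideanSpace ℝ (Fin d)) := fun ε =>
          {y | ∀ i, corner ε i ≤ y i ∧ y i ≤ corner ε i + ℓ n}
        -- the natural measure: mass `2^{-nd}` uniformly distributed on each cube
        let m : Measure (EuclideanSpace ℝ (Fin d)) :=
          ((2 : ENNReal) ^ (n * d))⁻¹ •
            ∑ ε : Fin n → Fin d → Bool, (volume (cube ε))⁻¹ • volume.restrict (cube ε)
        ∀ x : EuclideanSpace ℝ (Fin d),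
          ∫ r in Set.Ioi (0 : ℝ), ((m (Metric.ball x r)).toReal / r ^ s) ^ 2 / r ≤
            C * ∑ k ∈ Finset.range (n + 1), (((2 : ℝ) ^ (k * d))⁻¹ / ℓ k ^ s) ^ 2 := by
  have hds : 0 < (d : ℝ) - s := by linarith
  refine ⟨64 ^ d * (1 / (2 * (d - s)) + 1 / (2 * s)), by positivity, ?_⟩
  intro n ℓ lam _ hlam hpos hstep _ _ _ x
  have hℓ : ∀ k < n, 2 * ℓ (k + 1) < ℓ k := fun k hk => by nlinarith [hstep k hk, hpos k]
  have key := setIntegral_sq_div_rpow_div_self_le (a := fun k => 8 ^ d / 2 ^ (k * d))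
    (M := fun r => (CornerCantor.naturalMeasure d n ℓ).real (Metric.ball x r)) hs hsd hpos
    (fun _ => measureReal_nonneg)
    (fun r hr hrn => by
      simpa [Real.rpow_natCast] using
        CornerCantor.naturalMeasure_real_ball_le_of_le_last hℓ hpos x hr.le hrn)
    (fun r hr => CornerCantor.exists_naturalMeasure_real_ball_le hℓ hpos x hr)
  refine key.trans_eq ?_
  rw [Finset.mul_sum, Finset.mul_sum]
  refine Finset.sum_congr rfl fun k _ => ?_
  rw [show (64 : ℝ) ^ d = (8 ^ d) ^ 2 by rw [← pow_mul, mul_comm, pow_mul]; norm_num]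
  ring

/-- For the natural measure `m` on the `n`-th generation corner Cantor set built from
edge lengths `ℓ₀ > ℓ₁ > …` with `ℓ_{k+1} < λ ℓ_k`, `λ < 1/2`, one has for every `x`:
`∫₀^∞ [m(B(x,r))/r^s]² dr/r ≤ C(d,s) Σ_{k=0}^n θ_k²` with `θ_k = 2^{-kd}/ℓ_k^s`. -/
theorem stmt13 (d : ℕ) (hd : 0 < d) (s : ℝ) (hs : 0 < s) (hsd : s < d) :
    ∃ C : ℝ, 0 < C ∧
      ∀ (n : ℕ) (ℓ : ℕ → ℝ) (lam : ℝ), 0 < lam → lam < 1 / 2 →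
        (∀ k, 0 < ℓ k) → (∀ k, k < n → ℓ (k + 1) < lam * ℓ k) →
        -- lower-left corners of the generation-`n` cubes, indexed by the choices of
        -- corners at each of the `n` subdivision steps
        let corner : (Fin n → Fin d → Bool) → Fin d → ℝ := fun ε i =>
          ∑ k : Fin n, if ε k i then ℓ (k : ℕ) - ℓ ((k : ℕ) + 1) else 0
        let cube : (Fin n → Fin d → Bool) → Set (EuclideanSpace ℝ (Fin d)) := fun ε =>
          {y | ∀ i, corner ε i ≤ y i ∧ y i ≤ corner ε i + ℓ n}
        -- the natural measure: mass `2^{-nd}` uniformly distributed on each cube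
        let m : Measure (EuclideanSpace ℝ (Fin d)) :=
          ((2 : ENNReal) ^ (n * d))⁻¹ •
            ∑ ε : Fin n → Fin d → Bool, (volume (cube ε))⁻¹ • volume.restrict (cube ε)
        ∀ x : EuclideanSpace ℝ (Fin d),
          ∫ r in Set.Ioi (0 : ℝ), ((m (Metric.ball x r)).toReal / r ^ s) ^ 2 / r ≤
            C * ∑ k ∈ Finset.range (n + 1), (((2 : ℝ) ^ (k * d))⁻¹ / ℓ k ^ s) ^ 2 :=
  stmt13_general d s hs hsd
end

section
/- Let h be a measuring function on [0,∞) (continuous, strictly increasing, h(0)=0, h(∞)=∞, h(r)/r^d non-increasing), let 0 < s < d, and suppose t₁ < t₂ with h(t₁)/h(t₂) ≤ 0.05. Then max_{t₁ ≤ t ≤ t₂} h(t)/t^s ≤ C(d,s) · [ ∫_{t₁}^{t₂} (h(t)/t^s)² dt/t ]^{1/2}. -/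
open MeasureTheory Set

/-!
On a window `[a, L a]` containing `t`, the monotonicity of `h` and of `h(r)/r^d` keep
`h(u)/u^s` above `L^{-d} h(t)/t^s`, and such a window fits into `[t₁, t₂]` as soon as
`L ≤ t₂/t₁`. Since `dt/t` gives the window mass `log L`, the integral is at least
`L^{-2d} (h(t)/t^s)² log L`. The hypothesis `h(t₁)/h(t₂) ≤ 1/20` forces `t₂/t₁ ≥ 20^{1/d}`,
so `L = 20^{1/d}` works and gives `C = 20 / √(log 20 / d)`.
-/

namespace Measuring

variable {d : ℕ} {h : ℝ → ℝ}

theorem pos (hm : Measuring d h) {r : ℝ} (hr : 0 < r) : 0 < h r := by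
  simpa [hm.zero] using hm.mono (le_refl (0 : ℝ)) hr.le hr

theorem le_rpow_div_mul (hm : Measuring d h) {u t : ℝ} (hu : 0 < u) (hut : u ≤ t) :
    h t ≤ (t / u) ^ (d : ℝ) * h u := by
  have ht : 0 < t := hu.trans_le hut
  have hr := hm.ratio u t hu hut
  rw [div_le_div_iff₀ (by positivity) (by positivity)] at hr
  rw [Real.div_rpow ht.le hu.le, div_mul_eq_mul_div, le_div_iff₀ (by positivity)]
  linarith

theorem le_rpow_div_of_div_le_inv (hm : Measuring d h) {K t₁ t₂ : ℝ} (hK : 0 < K)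
    (ht₁ : 0 < t₁) (ht₁₂ : t₁ ≤ t₂) (hratio : h t₁ / h t₂ ≤ K⁻¹) :
    K ≤ (t₂ / t₁) ^ (d : ℝ) := by
  have ht₂ : 0 < t₂ := ht₁.trans_le ht₁₂
  have h₁ : K * h t₁ ≤ h t₂ := by
    rwa [div_le_iff₀ (hm.pos ht₂), le_inv_mul_iff₀ hK] at hratio
  exact le_of_mul_le_mul_right (h₁.trans (hm.le_rpow_div_mul ht₁ ht₁₂)) (hm.pos ht₁)

theorem div_rpow_le_mul_div_rpow (hm : Measuring d h) {s L t u : ℝ} (hs : 0 ≤ s)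
    (hsd : s ≤ d) (hL : 1 ≤ L) (ht : 0 < t) (hu : 0 < u) (htu : t ≤ L * u)
    (hut : u ≤ L * t) :
    h t / t ^ s ≤ L ^ (d : ℝ) * (h u / u ^ s) := by
  have hhu := hm.pos hu
  rw [mul_div_assoc', div_le_div_iff₀ (by positivity) (by positivity)]
  rcases le_total t u with htu' | hut'
  · have hh : h t ≤ h u := hm.mono.monotoneOn ht.le hu.le htu'
    have hpow : u ^ s ≤ L ^ (d : ℝ) * t ^ s :=
      calc u ^ s ≤ (L * t) ^ s := by gcongr
        _ = L ^ s * t ^ s := Real.mul_rpow (by linarith) ht.le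
        _ ≤ L ^ (d : ℝ) * t ^ s := by gcongr
    calc h t * u ^ s ≤ h u * (L ^ (d : ℝ) * t ^ s) := by gcongr
      _ = L ^ (d : ℝ) * h u * t ^ s := by ring
  · have hh : h t ≤ L ^ (d : ℝ) * h u :=
      calc h t ≤ (t / u) ^ (d : ℝ) * h u := hm.le_rpow_div_mul hu hut'
        _ ≤ L ^ (d : ℝ) * h u := by gcongr; rwa [div_le_iff₀ hu]
    gcongr

theorem continuousOn_div_rpow (hm : Measuring d h) (s : ℝ) {t₁ t₂ : ℝ} (ht₁ : 0 < t₁) :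
    ContinuousOn (fun u => h u / u ^ s) (Icc t₁ t₂) := by
  have hpos : ∀ u ∈ Icc t₁ t₂, 0 < u := fun u hu => ht₁.trans_le hu.1
  refine (hm.cont.mono fun u hu => (hpos u hu).le).div
    (continuousOn_id.rpow_const fun u hu => Or.inl (hpos u hu).ne') fun u hu => ?_
  exact (Real.rpow_pos_of_pos (hpos u hu) s).ne'

end Measuring

theorem exists_mem_Icc_mul_of_mul_le {L t₁ t₂ t : ℝ} (hL : 1 ≤ L) (ht₁ : 0 < t₁)
    (hLt : L * t₁ ≤ t₂) (ht : t ∈ Icc t₁ t₂) :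
    ∃ a, t₁ ≤ a ∧ L * a ≤ t₂ ∧ t ∈ Icc a (L * a) := by
  have hL0 : 0 < L := by linarith
  have ht₁' : t₁ ≤ t₂ / L := by rw [le_div_iff₀ hL0]; linarith
  refine ⟨min t (t₂ / L), le_min ht.1 ht₁', ?_, min_le_left _ _, ?_⟩
  · rw [mul_min_of_nonneg _ _ hL0.le, mul_div_cancel₀ _ hL0.ne']
    exact min_le_right _ _
  · rw [mul_min_of_nonneg _ _ hL0.le, mul_div_cancel₀ _ hL0.ne']
    exact le_min (by nlinarith [ht₁.trans_le ht.1]) ht.2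

theorem setIntegral_Ioc_mul_inv {a L : ℝ} (ha : 0 < a) (hL : 1 ≤ L) :
    ∫ u in Ioc a (L * a), u⁻¹ = Real.log L := by
  rw [← intervalIntegral.integral_of_le (by nlinarith),
    integral_inv_of_pos ha (by positivity), mul_div_cancel_right₀ _ ha.ne']

theorem mul_sqrt_log_le_sqrt_setIntegral {g : ℝ → ℝ} {t₁ t₂ a L c : ℝ}
    (hg : IntegrableOn (fun u => g u ^ 2 / u) (Ioc t₁ t₂)) (ht₁ : 0 < t₁) (ha : t₁ ≤ a)
    (haL : L * a ≤ t₂) (hL : 1 ≤ L) (hc : 0 ≤ c) (hcg : ∀ u ∈ Ioc a (L * a), c ≤ g u) :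
    c * Real.sqrt (Real.log L) ≤ Real.sqrt (∫ u in Ioc t₁ t₂, g u ^ 2 / u) := by
  have ha0 : 0 < a := ht₁.trans_le ha
  have hsub : Ioc a (L * a) ⊆ Ioc t₁ t₂ := Ioc_subset_Ioc ha haL
  have hinv : IntegrableOn (fun u : ℝ => c ^ 2 * u⁻¹) (Ioc a (L * a)) :=
    ((continuousOn_const.mul (continuousOn_inv₀.mono fun u hu => (ha0.trans_le hu.1).ne')
      ).integrableOn_Icc).mono_set Ioc_subset_Icc_self
  have hI : c ^ 2 * Real.log L ≤ ∫ u in Ioc t₁ t₂, g u ^ 2 / u :=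
    calc c ^ 2 * Real.log L = ∫ u in Ioc a (L * a), c ^ 2 * u⁻¹ := by
          rw [integral_const_mul, setIntegral_Ioc_mul_inv ha0 hL]
      _ ≤ ∫ u in Ioc a (L * a), g u ^ 2 / u := by
          refine setIntegral_mono_on hinv (hg.mono_set hsub) measurableSet_Ioc fun u hu => ?_
          have hu0 : 0 < u := ha0.trans hu.1
          rw [div_eq_mul_inv]
          gcongr
          exact hcg u hu
      _ ≤ ∫ u in Ioc t₁ t₂, g u ^ 2 / u := by
          refine setIntegral_mono_set hg ?_ hsub.eventuallyLE
          refine (ae_restrict_iff' measurableSet_Ioc).mpr (.of_forall fun u hu => ?_)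
          have hu0 : 0 < u := ht₁.trans hu.1
          positivity
  calc c * Real.sqrt (Real.log L) = Real.sqrt (c ^ 2 * Real.log L) := by
        rw [Real.sqrt_mul (sq_nonneg c), Real.sqrt_sq hc]
    _ ≤ _ := Real.sqrt_le_sqrt hI

/-- If `h(t₁)/h(t₂) ≤ 0.05`, then `max_{t₁ ≤ t ≤ t₂} h(t)/t^s` is controlled by
`C(d,s)·[∫_{t₁}^{t₂} (h(t)/t^s)² dt/t]^{1/2}`. -/
theorem stmt14 (d : ℕ) (s : ℝ) (hs : 0 < s) (hsd : s < d) :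
    ∃ C : ℝ, 0 < C ∧ ∀ h : ℝ → ℝ, Measuring d h →
      ∀ t₁ t₂ : ℝ, 0 < t₁ → t₁ < t₂ → h t₁ / h t₂ ≤ 0.05 →
        ∀ t ∈ Set.Icc t₁ t₂,
          h t / t ^ s ≤ C * Real.sqrt (∫ u in Set.Ioc t₁ t₂, (h u / u ^ s) ^ 2 / u) := by
  have hd : (0 : ℝ) < d := hs.trans hsd
  set L : ℝ := 20 ^ (d : ℝ)⁻¹
  have hL : 1 < L := Real.one_lt_rpow (by norm_num) (by positivity)
  have hLd : L ^ (d : ℝ) = 20 := Real.rpow_inv_rpow (by norm_num) hd.ne'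
  have hlog : 0 < Real.sqrt (Real.log L) := Real.sqrt_pos.mpr (Real.log_pos hL)
  refine ⟨20 / Real.sqrt (Real.log L), by positivity, ?_⟩
  intro h hm t₁ t₂ ht₁ ht₁₂ hratio t ht
  have ht0 : 0 < t := ht₁.trans_le ht.1
  have hLt : L * t₁ ≤ t₂ := by
    have h20 := hm.le_rpow_div_of_div_le_inv (K := 20) (by norm_num) ht₁ ht₁₂.le
      (by norm_num at hratio ⊢; exact hratio)
    rw [← le_div_iff₀ ht₁]
    exact (Real.rpow_inv_le_iff_of_pos (by norm_num) (div_pos (ht₁.trans ht₁₂) ht₁).le hd).mpr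
      h20
  obtain ⟨a, hta, haL, hta'⟩ := exists_mem_Icc_mul_of_mul_le hL.le ht₁ hLt ht
  have hbound : ∀ u ∈ Ioc a (L * a), h t / t ^ s / 20 ≤ h u / u ^ s := by
    intro u hu
    have hu0 : 0 < u := (ht₁.trans_le hta).trans hu.1
    rw [div_le_iff₀' (by norm_num), ← hLd]
    exact hm.div_rpow_le_mul_div_rpow hs.le hsd.le hL.le ht0 hu0
      (by nlinarith [hta'.2, hu.1]) (by nlinarith [hta'.1, hu.2])
  have hint : IntegrableOn (fun u => (h u / u ^ s) ^ 2 / u) (Ioc t₁ t₂) :=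
    (((hm.continuousOn_div_rpow s ht₁).pow 2).div continuousOn_id fun u hu =>
      (ht₁.trans_le hu.1).ne').integrableOn_Icc.mono_set Ioc_subset_Icc_self
  have hsqrt := mul_sqrt_log_le_sqrt_setIntegral hint ht₁ hta haL hL.le
    (by have := hm.pos ht0; positivity) hbound
  rw [div_mul_eq_mul_div, le_div_iff₀ hlog]
  linarith
end
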